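/- arXiv:2301.06731 — 13 statements merged into one kernel-verified Lean document; each statement's English description precedes it below -/
import Mathlib

section
/- Let E, A ∈ ℂ^{n×n}, B ∈ ℂ^{n×m}, let X = X^H ∈ ℂ^{n×n} be Hermitian, and let z ∈ ℂ be such that zE − A is invertible. Then, writing R := (zE − A)^{-1}, the identity [R B; I_m]^H · [[−A^H X A + E^H X E, −A^H X B], [−B^H X A, −B^H X B]] · [R B; I_m] = (1 − |z|²) B^H R^H E^H X E R B holds, where [R B; I_m] denotes the (n+m)×m matrix obtained by stacking R B on top of I_m. -/
/-!
With `u = (zE - A)⁻¹ B` the block form equals `(Eu)ᴴ X (Eu) - (Au + B)ᴴ X (Au + B)`, and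
`(zE - A) u = B` says exactly that `Au + B = z • Eu`, so the second term is `|z|²` times the first.
-/

open Matrix

section

variable {l m n α : Type*} [Fintype m] [Fintype n]

theorem conjTranspose_fromRows_mul_fromBlocks_mul_fromRows [Semiring α] [StarRing α]
    (u : Matrix m l α) (v : Matrix n l α) (P : Matrix m m α) (Q : Matrix m n α)
    (S : Matrix n m α) (T : Matrix n n α) :
    (fromRows u v)ᴴ * fromBlocks P Q S T * fromRows u v
      = uᴴ * P * u + uᴴ * Q * v + vᴴ * S * u + vᴴ * T * v := by
  rw [conjTranspose_fromRows_eq_fromCols_conjTranspose, fromCols_mul_fromBlocks,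
    fromCols_mul_fromRows]
  simp only [Matrix.add_mul, Matrix.mul_assoc]
  abel

theorem conjTranspose_fromRows_one_mul_fromBlocks_mul_fromRows_one [Ring α] [StarRing α]
    [DecidableEq m] (E A X : Matrix n n α) (B u : Matrix n m α) :
    (fromRows u (1 : Matrix m m α))ᴴ
        * fromBlocks (-(Aᴴ * X * A) + Eᴴ * X * E) (-(Aᴴ * X * B)) (-(Bᴴ * X * A)) (-(Bᴴ * X * B))
        * fromRows u (1 : Matrix m m α)
      = (E * u)ᴴ * X * (E * u) - (A * u + B)ᴴ * X * (A * u + B) := by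
  rw [conjTranspose_fromRows_mul_fromBlocks_mul_fromRows]
  simp only [conjTranspose_one, conjTranspose_add, conjTranspose_mul, Matrix.one_mul,
    Matrix.mul_one, Matrix.add_mul, Matrix.mul_add, Matrix.neg_mul, Matrix.mul_neg,
    Matrix.mul_assoc]
  abel

end

theorem conjTranspose_smul_mul_mul_smul {m n 𝕜 : Type*} [Fintype n] [RCLike 𝕜] (z : 𝕜)
    (X : Matrix n n 𝕜) (w : Matrix n m 𝕜) :
    (z • w)ᴴ * X * (z • w) = ((‖z‖ : 𝕜) ^ 2) • (wᴴ * X * w) := by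
  rw [conjTranspose_smul, Matrix.smul_mul, Matrix.smul_mul, Matrix.mul_smul, smul_smul,
    RCLike.star_def, RCLike.conj_mul]

theorem kyp_resolvent_identity_general
    (n m : ℕ)
    (E A X : Matrix (Fin n) (Fin n) ℂ)
    (B : Matrix (Fin n) (Fin m) ℂ)
    (z : ℂ) (hz : IsUnit (z • E - A)) :
    (Matrix.fromRows ((z • E - A)⁻¹ * B) (1 : Matrix (Fin m) (Fin m) ℂ))ᴴ
      * (Matrix.fromBlocks
          (-(Aᴴ * X * A) + Eᴴ * X * E) (-(Aᴴ * X * B))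
          (-(Bᴴ * X * A)) (-(Bᴴ * X * B)))
      * (Matrix.fromRows ((z • E - A)⁻¹ * B) (1 : Matrix (Fin m) (Fin m) ℂ))
    = (1 - ((‖z‖ : ℝ) : ℂ) ^ 2) •
        (Bᴴ * ((z • E - A)⁻¹)ᴴ * Eᴴ * X * E * (z • E - A)⁻¹ * B) := by
  set u := (z • E - A)⁻¹ * B
  have hu : A * u + B = z • (E * u) := by
    have hsolve : (z • E - A) * u = B :=
      mul_nonsing_inv_cancel_left _ B ((isUnit_iff_isUnit_det _).mp hz)
    rw [← hsolve, Matrix.sub_mul, Matrix.smul_mul]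
    abel
  rw [conjTranspose_fromRows_one_mul_fromBlocks_mul_fromRows_one, hu,
    conjTranspose_smul_mul_mul_smul, sub_smul, one_smul]
  simp only [u, conjTranspose_mul, Matrix.mul_assoc, RCLike.ofReal_eq_complex_ofReal]

/-- The key algebraic identity behind the KYP / positive realness analysis:
for Hermitian `X` and invertible `zE - A`, with `R = (zE - A)⁻¹`,
`[RB; I]ᴴ · [[-AᴴXA + EᴴXE, -AᴴXB], [-BᴴXA, -BᴴXB]] · [RB; I]
  = (1 - |z|²) · Bᴴ Rᴴ Eᴴ X E R B`. -/
theorem kyp_resolvent_identity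
    (n m : ℕ)
    (E A X : Matrix (Fin n) (Fin n) ℂ)
    (B : Matrix (Fin n) (Fin m) ℂ)
    (hX : X.IsHermitian)
    (z : ℂ) (hz : IsUnit (z • E - A)) :
    (Matrix.fromRows ((z • E - A)⁻¹ * B) (1 : Matrix (Fin m) (Fin m) ℂ))ᴴ
      * (Matrix.fromBlocks
          (-(Aᴴ * X * A) + Eᴴ * X * E) (-(Aᴴ * X * B))
          (-(Bᴴ * X * A)) (-(Bᴴ * X * B)))
      * (Matrix.fromRows ((z • E - A)⁻¹ * B) (1 : Matrix (Fin m) (Fin m) ℂ))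
    = (1 - ((‖z‖ : ℝ) : ℂ) ^ 2) •
        (Bᴴ * ((z • E - A)⁻¹)ᴴ * Eᴴ * X * E * (z • E - A)⁻¹ * B) :=
  kyp_resolvent_identity_general n m E A X B z hz
end

section
/- Let E, A ∈ ℂ^{n×n}, B ∈ ℂ^{n×m}, C ∈ ℂ^{m×n}, D ∈ ℂ^{m×m}, and suppose X ∈ ℂ^{n×n} is a solution of the discrete-time impedance KYP inequality (d-iKYP). Then for every z ∈ ℂ with |z| > 1 such that zE − A is invertible, the matrix T(z) + T(z)^H is positive semidefinite, where T(z) := C (zE − A)^{-1} B + D is the transfer function of the system. -/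
/-!
Put `x = (zE - A)⁻¹ B u`, so that `A x + B u = z E x` and `T(z) u = C x + D u`. The d-iKYP form
at `(x, u)` expands to `(Ex)ᴴ X (Ex) - (Ax + Bu)ᴴ X (Ax + Bu) + 2 Re (uᴴ T(z) u)
= (1 - |z|²) (Ex)ᴴ X (Ex) + uᴴ (T(z) + T(z)ᴴ) u`. It is `≥ 0`, and the first term is `≤ 0` for
`|z| ≥ 1` because `X ≥ 0`, so `uᴴ (T(z) + T(z)ᴴ) u ≥ 0`.
-/

open Matrix
open scoped ComplexOrder

namespace Matrix

variable {𝕜 ι κ : Type*} [RCLike 𝕜] [Fintype ι] [Fintype κ]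

theorem star_sumElim_dotProduct_fromBlocks_mulVec_sumElim
    (P : Matrix ι ι 𝕜) (Q : Matrix ι κ 𝕜) (R : Matrix κ ι 𝕜) (S : Matrix κ κ 𝕜)
    (x : ι → 𝕜) (u : κ → 𝕜) :
    star (Sum.elim x u) ⬝ᵥ (fromBlocks P Q R S *ᵥ Sum.elim x u) =
      star x ⬝ᵥ (P *ᵥ x) + star x ⬝ᵥ (Q *ᵥ u) + star u ⬝ᵥ (R *ᵥ x) + star u ⬝ᵥ (S *ᵥ u) := by
  have hstar : star (Sum.elim x u) = Sum.elim (star x) (star u) := by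
    ext (i | i) <;> rfl
  rw [fromBlocks_mulVec, hstar, sumElim_dotProduct_sumElim, Sum.elim_comp_inl, Sum.elim_comp_inr,
    dotProduct_add, dotProduct_add, ← add_assoc]

theorem star_dotProduct_conjTranspose_mulVec (M : Matrix ι κ 𝕜) (a : κ → 𝕜) (b : ι → 𝕜) :
    star a ⬝ᵥ (Mᴴ *ᵥ b) = star (M *ᵥ a) ⬝ᵥ b := by
  rw [star_mulVec, dotProduct_mulVec]

theorem star_dotProduct_conjTranspose_mul_mul_mulVec {κ' : Type*} [Fintype κ']
    (P : Matrix ι κ 𝕜) (X : Matrix ι ι 𝕜) (Q : Matrix ι κ' 𝕜) (a : κ → 𝕜) (b : κ' → 𝕜) :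
    star a ⬝ᵥ ((Pᴴ * X * Q) *ᵥ b) = star (P *ᵥ a) ⬝ᵥ (X *ᵥ (Q *ᵥ b)) := by
  rw [← mulVec_mulVec, ← mulVec_mulVec, star_dotProduct_conjTranspose_mulVec]

def diKYPMatrix (E A X : Matrix ι ι 𝕜) (B : Matrix ι κ 𝕜) (C : Matrix κ ι 𝕜)
    (D : Matrix κ κ 𝕜) : Matrix (ι ⊕ κ) (ι ⊕ κ) 𝕜 :=
  fromBlocks (-(Aᴴ * X * A) + Eᴴ * X * E) (Cᴴ - Aᴴ * X * B) (C - Bᴴ * X * A) (D + Dᴴ - Bᴴ * X * B)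

theorem star_dotProduct_diKYPMatrix_mulVec (E A X : Matrix ι ι 𝕜) (B : Matrix ι κ 𝕜)
    (C : Matrix κ ι 𝕜) (D : Matrix κ κ 𝕜) (x : ι → 𝕜) (u : κ → 𝕜) :
    star (Sum.elim x u) ⬝ᵥ (diKYPMatrix E A X B C D *ᵥ Sum.elim x u) =
      star (E *ᵥ x) ⬝ᵥ (X *ᵥ (E *ᵥ x))
        - star (A *ᵥ x + B *ᵥ u) ⬝ᵥ (X *ᵥ (A *ᵥ x + B *ᵥ u))
        + (star u ⬝ᵥ (C *ᵥ x + D *ᵥ u) + star (C *ᵥ x + D *ᵥ u) ⬝ᵥ u) := by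
  rw [diKYPMatrix, star_sumElim_dotProduct_fromBlocks_mulVec_sumElim]
  simp only [add_mulVec, sub_mulVec, neg_mulVec, dotProduct_add, dotProduct_sub, dotProduct_neg,
    star_dotProduct_conjTranspose_mul_mul_mulVec, star_dotProduct_conjTranspose_mulVec,
    mulVec_add, star_add, add_dotProduct]
  ring

theorem star_dotProduct_diKYPMatrix_mulVec_of_state_eq {E A X : Matrix ι ι 𝕜}
    {B : Matrix ι κ 𝕜} {z : 𝕜} {x : ι → 𝕜} {u : κ → 𝕜} (C : Matrix κ ι 𝕜) (D : Matrix κ κ 𝕜)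
    (hstate : A *ᵥ x + B *ᵥ u = z • (E *ᵥ x)) :
    star (Sum.elim x u) ⬝ᵥ (diKYPMatrix E A X B C D *ᵥ Sum.elim x u) =
      (1 - (‖z‖ : 𝕜) ^ 2) * (star (E *ᵥ x) ⬝ᵥ (X *ᵥ (E *ᵥ x)))
        + (star u ⬝ᵥ (C *ᵥ x + D *ᵥ u) + star (C *ᵥ x + D *ᵥ u) ⬝ᵥ u) := by
  rw [star_dotProduct_diKYPMatrix_mulVec, hstate, star_smul, mulVec_smul, smul_dotProduct,
    dotProduct_smul, smul_eq_mul, smul_eq_mul, ← mul_assoc, RCLike.star_def, RCLike.conj_mul]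
  ring

theorem input_output_nonneg_of_diKYP {E A X : Matrix ι ι 𝕜} {B : Matrix ι κ 𝕜}
    {C : Matrix κ ι 𝕜} {D : Matrix κ κ 𝕜} (hX : X.PosSemidef)
    (hKYP : (diKYPMatrix E A X B C D).PosSemidef) {z : 𝕜} (hz : 1 ≤ ‖z‖) {x : ι → 𝕜}
    {u : κ → 𝕜} (hstate : A *ᵥ x + B *ᵥ u = z • (E *ᵥ x)) :
    0 ≤ star u ⬝ᵥ (C *ᵥ x + D *ᵥ u) + star (C *ᵥ x + D *ᵥ u) ⬝ᵥ u := by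
  have hform := hKYP.dotProduct_mulVec_nonneg (Sum.elim x u)
  rw [star_dotProduct_diKYPMatrix_mulVec_of_state_eq C D hstate] at hform
  have hscale : (0 : 𝕜) ≤ ((‖z‖ ^ 2 - 1 : ℝ) : 𝕜) :=
    RCLike.ofReal_nonneg.mpr (by nlinarith)
  have hE := mul_nonneg hscale (hX.dotProduct_mulVec_nonneg (E *ᵥ x))
  push_cast at hE
  linear_combination hform + hE

end Matrix

/-- If the discrete-time impedance KYP inequality (d-iKYP) is solvable, then the
transfer function `T(z) = C (zE - A)⁻¹ B + D` satisfies `T(z) + T(z)ᴴ ≥ 0` for all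
`|z| > 1` at which `zE - A` is invertible (positive realness). -/
theorem diKYP_implies_positive_real
    (n m : ℕ)
    (E A X : Matrix (Fin n) (Fin n) ℂ)
    (B : Matrix (Fin n) (Fin m) ℂ)
    (C : Matrix (Fin m) (Fin n) ℂ)
    (D : Matrix (Fin m) (Fin m) ℂ)
    (hX : X.PosSemidef)
    (hKYP : (Matrix.fromBlocks
        (-(Aᴴ * X * A) + Eᴴ * X * E) (Cᴴ - Aᴴ * X * B)
        (C - Bᴴ * X * A) (D + Dᴴ - Bᴴ * X * B)).PosSemidef) :
    ∀ z : ℂ, 1 < ‖z‖ → IsUnit (z • E - A) →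
      ((C * (z • E - A)⁻¹ * B + D) + (C * (z • E - A)⁻¹ * B + D)ᴴ).PosSemidef := by
  intro z hz hU
  refine PosSemidef.of_dotProduct_mulVec_nonneg (isHermitian_add_transpose_self _) fun u => ?_
  set x := (z • E - A)⁻¹ *ᵥ (B *ᵥ u) with hx_def
  have hFx : (z • E - A) *ᵥ x = B *ᵥ u := by
    rw [hx_def, mulVec_mulVec, mul_nonsing_inv _ ((isUnit_iff_isUnit_det _).mp hU), one_mulVec]
  have hstate : A *ᵥ x + B *ᵥ u = z • (E *ᵥ x) := by
    rw [← hFx, sub_mulVec, smul_mulVec]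
    abel
  have hTu : (C * (z • E - A)⁻¹ * B + D) *ᵥ u = C *ᵥ x + D *ᵥ u := by
    rw [add_mulVec, ← mulVec_mulVec, ← mulVec_mulVec]
  rw [add_mulVec, dotProduct_add, star_dotProduct_conjTranspose_mulVec, hTu]
  exact input_output_nonneg_of_diKYP hX hKYP hz.le hstate
end

section
/- Let E, A ∈ ℂ^{n×n}, B ∈ ℂ^{n×m}, C ∈ ℂ^{m×n}, D ∈ ℂ^{m×m}, and suppose X ∈ ℂ^{n×n} is a solution of the discrete-time scattering KYP inequality (d-sKYP). Then for every z ∈ ℂ with |z| > 1 such that zE − A is invertible, the matrix I_m − T(z)^H T(z) is positive semidefinite, where T(z) := C (zE − A)^{-1} B + D is the transfer function of the system. -/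
open Matrix
open scoped ComplexOrder

/-!
With `G = (zE - A)⁻¹ B` and `T = C G + D`, the resolvent identity `A G + B = z E G` makes the
quadratic form of the d-sKYP matrix along the columns of `[G; I]` equal to
`I - Tᴴ T - (|z|² - 1) (E G)ᴴ X (E G)`. Both the compressed d-sKYP matrix and
`(|z|² - 1) (E G)ᴴ X (E G)` are positive semidefinite when `|z| ≥ 1`, hence so is `I - Tᴴ T`.
-/

namespace Matrix

variable {R ι κ ν : Type*} [Fintype ι]

def dsKYPMatrix [Fintype ν] [DecidableEq κ] [Ring R] [StarRing R]
    (E A X : Matrix ι ι R) (B : Matrix ι κ R) (C : Matrix ν ι R) (D : Matrix ν κ R) :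
    Matrix (ι ⊕ κ) (ι ⊕ κ) R :=
  fromBlocks (-(Aᴴ * X * A) + Eᴴ * X * E - Cᴴ * C) (-(Aᴴ * X * B) - Cᴴ * D)
    (-(Dᴴ * C) - Bᴴ * X * A) (1 - Dᴴ * D - Bᴴ * X * B)

theorem fromRows_conjTranspose_mul_dsKYPMatrix_mul_fromRows [Fintype κ] [Fintype ν]
    [DecidableEq κ] [Ring R] [StarRing R]
    (E A X : Matrix ι ι R) (B : Matrix ι κ R) (C : Matrix ν ι R) (D : Matrix ν κ R)
    (G : Matrix ι κ R) :
    (fromRows G (1 : Matrix κ κ R))ᴴ * dsKYPMatrix E A X B C D *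
        fromRows G (1 : Matrix κ κ R) =
      (E * G)ᴴ * X * (E * G) - (A * G + B)ᴴ * X * (A * G + B) - (C * G + D)ᴴ * (C * G + D)
        + 1 := by
  rw [dsKYPMatrix, conjTranspose_fromRows_eq_fromCols_conjTranspose, Matrix.mul_assoc,
    fromBlocks_mul_fromRows, fromCols_mul_fromRows]
  simp only [conjTranspose_add, conjTranspose_mul, conjTranspose_one, sub_eq_add_neg,
    Matrix.add_mul, Matrix.mul_add, Matrix.mul_one, Matrix.one_mul, Matrix.neg_mul,
    Matrix.mul_neg, neg_add, Matrix.mul_assoc]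
  abel

theorem mul_resolvent_mul_add_eq [DecidableEq ι] [CommRing R] {E A : Matrix ι ι R}
    (B : Matrix ι κ R) {z : R} (h : IsUnit (z • E - A)) :
    A * ((z • E - A)⁻¹ * B) + B = z • (E * ((z • E - A)⁻¹ * B)) := by
  set G := (z • E - A)⁻¹ * B
  have hG : z • (E * G) - A * G = B := by
    rw [← Matrix.smul_mul, ← Matrix.sub_mul, ← Matrix.mul_assoc,
      mul_nonsing_inv _ ((isUnit_iff_isUnit_det _).mp h), Matrix.one_mul]
  exact (sub_eq_iff_eq_add'.mp hG).symm

theorem one_sub_conjTranspose_mul_self_eq [Fintype κ] [Fintype ν] [DecidableEq κ]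
    [CommRing R] [StarRing R] {E A X : Matrix ι ι R} {B : Matrix ι κ R}
    {C : Matrix ν ι R} {D : Matrix ν κ R} {G : Matrix ι κ R} {z : R}
    (hG : A * G + B = z • (E * G)) :
    1 - (C * G + D)ᴴ * (C * G + D) =
      (fromRows G (1 : Matrix κ κ R))ᴴ * dsKYPMatrix E A X B C D *
        fromRows G (1 : Matrix κ κ R)
        + (star z * z - 1) • ((E * G)ᴴ * X * (E * G)) := by
  rw [fromRows_conjTranspose_mul_dsKYPMatrix_mul_fromRows, hG, conjTranspose_smul,
    Matrix.smul_mul, Matrix.smul_mul, Matrix.mul_smul, smul_smul, sub_smul, one_smul]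
  abel

end Matrix

/-- If the discrete-time scattering KYP inequality (d-sKYP) is solvable, then the
transfer function `T(z) = C (zE - A)⁻¹ B + D` satisfies `I - T(z)ᴴ T(z) ≥ 0` for all
`|z| > 1` at which `zE - A` is invertible (bounded realness). -/
theorem dsKYP_implies_bounded_real
    (n m : ℕ)
    (E A X : Matrix (Fin n) (Fin n) ℂ)
    (B : Matrix (Fin n) (Fin m) ℂ)
    (C : Matrix (Fin m) (Fin n) ℂ)
    (D : Matrix (Fin m) (Fin m) ℂ)
    (hX : X.PosSemidef)
    (hKYP : (Matrix.fromBlocks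
        (-(Aᴴ * X * A) + Eᴴ * X * E - Cᴴ * C) (-(Aᴴ * X * B) - Cᴴ * D)
        (-(Dᴴ * C) - Bᴴ * X * A) (1 - Dᴴ * D - Bᴴ * X * B)).PosSemidef) :
    ∀ z : ℂ, 1 < ‖z‖ → IsUnit (z • E - A) →
      ((1 : Matrix (Fin m) (Fin m) ℂ)
        - (C * (z • E - A)⁻¹ * B + D)ᴴ * (C * (z • E - A)⁻¹ * B + D)).PosSemidef := by
  intro z hz hu
  have hz_sq : (0 : ℂ) ≤ star z * z - 1 := by
    rw [Complex.star_def, Complex.conj_mul', sub_nonneg]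
    exact_mod_cast one_le_pow₀ hz.le
  rw [Matrix.mul_assoc,
    one_sub_conjTranspose_mul_self_eq (X := X) (mul_resolvent_mul_add_eq B hu)]
  exact (hKYP.conjTranspose_mul_mul_same _).add ((hX.conjTranspose_mul_mul_same _).smul hz_sq)
end

section
/- Let E, A ∈ ℂ^{n×n}, B ∈ ℂ^{n×m}, C ∈ ℂ^{m×n}, D ∈ ℂ^{m×m}, and suppose X ∈ ℂ^{n×n} is a solution of the discrete-time impedance KYP inequality (d-iKYP). If z ∈ ℂ with |z| > 1 and x ∈ ℂ^n satisfy A x = z E x, then X (E x) = 0 and C x = 0. In particular, eigenvalues of the pair (E, A) of modulus greater than one are not poles of the transfer function C(zE − A)^{-1}B + D. -/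
/-!
Testing the KYP matrix against `(x, 0)` leaves only its top-left block, whose quadratic form at an
eigenvector with `A x = z E x` equals `(1 - |z|²) (Ex)ᴴ X (Ex)`. This is `≥ 0` while `|z| > 1` and
`X ≥ 0`, so it vanishes, which forces `X (E x) = 0`. A vanishing quadratic form of a positive
semidefinite matrix means `(x, 0)` lies in its kernel; the second block row of that identity reads
`C x - Bᴴ X A x = 0`, and `X A x = z X E x = 0`.
-/

open Matrix
open scoped ComplexOrder

namespace Matrix

variable {m n : Type*} [Fintype m] [Fintype n]

theorem star_sumElim_zero_dotProduct_fromBlocks_mulVec {α : Type*} [NonUnitalNonAssocSemiring α]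
    [StarAddMonoid α] (P : Matrix m m α) (Q : Matrix m n α) (R : Matrix n m α) (S : Matrix n n α)
    (x : m → α) :
    star (Sum.elim x 0) ⬝ᵥ fromBlocks P Q R S *ᵥ Sum.elim x 0 = star x ⬝ᵥ P *ᵥ x := by
  simp [fromBlocks_mulVec, Function.star_sumElim, sumElim_dotProduct_sumElim]

theorem star_dotProduct_conjTranspose_mul_mul_mulVec_s6 {α : Type*} [CommSemiring α] [StarRing α]
    (A : Matrix m n α) (X : Matrix m m α) (x : n → α) :
    star x ⬝ᵥ (Aᴴ * X * A) *ᵥ x = star (A *ᵥ x) ⬝ᵥ X *ᵥ (A *ᵥ x) := by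
  rw [← mulVec_mulVec, ← mulVec_mulVec, dotProduct_mulVec, star_mulVec]

theorem star_smul_dotProduct_mulVec_smul {α : Type*} [CommSemiring α] [StarRing α]
    (X : Matrix n n α) (c : α) (y : n → α) :
    star (c • y) ⬝ᵥ X *ᵥ (c • y) = star c * c * (star y ⬝ᵥ X *ᵥ y) := by
  rw [star_smul, mulVec_smul, smul_dotProduct, dotProduct_smul, smul_eq_mul, smul_eq_mul]
  ring

variable {𝕜 : Type*} [RCLike 𝕜]

theorem PosSemidef.mulVec_eq_zero_of_fromBlocks {P : Matrix m m 𝕜} {Q : Matrix m n 𝕜}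
    {R : Matrix n m 𝕜} {S : Matrix n n 𝕜} (h : (fromBlocks P Q R S).PosSemidef) {x : m → 𝕜}
    (hx : star x ⬝ᵥ P *ᵥ x = 0) : R *ᵥ x = 0 := by
  rw [← star_sumElim_zero_dotProduct_fromBlocks_mulVec P Q R S, h.dotProduct_mulVec_zero_iff,
    fromBlocks_mulVec] at hx
  simpa using congrArg (· ∘ Sum.inr) hx

end Matrix

theorem eq_zero_of_mul_le_self_of_one_lt {α : Type*} [Semiring α] [PartialOrder α]
    [MulPosStrictMono α] {a p : α} (ha : 1 < a) (hp : 0 ≤ p) (h : a * p ≤ p) : p = 0 := by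
  by_contra hne
  exact (lt_mul_of_one_lt_left (lt_of_le_of_ne hp (Ne.symm hne)) ha).not_ge h

/-- For a solution `X` of the discrete-time impedance KYP inequality (d-iKYP),
eigenvectors of the pencil `(E, A)` for eigenvalues of modulus greater than one
satisfy `X (E x) = 0` and `C x = 0`; in particular such eigenvalues are not poles
of the transfer function. -/
theorem diKYP_eigenvalues_outside_disk
    (n m : ℕ)
    (E A X : Matrix (Fin n) (Fin n) ℂ)
    (B : Matrix (Fin n) (Fin m) ℂ)
    (C : Matrix (Fin m) (Fin n) ℂ)
    (D : Matrix (Fin m) (Fin m) ℂ)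
    (hX : X.PosSemidef)
    (hKYP : (Matrix.fromBlocks
        (-(Aᴴ * X * A) + Eᴴ * X * E) (Cᴴ - Aᴴ * X * B)
        (C - Bᴴ * X * A) (D + Dᴴ - Bᴴ * X * B)).PosSemidef)
    (z : ℂ) (hz : 1 < ‖z‖)
    (x : Fin n → ℂ) (hxe : A *ᵥ x = z • (E *ᵥ x)) :
    X *ᵥ (E *ᵥ x) = 0 ∧ C *ᵥ x = 0 := by
  set p := star (E *ᵥ x) ⬝ᵥ X *ᵥ (E *ᵥ x)
  have hquad : star x ⬝ᵥ (-(Aᴴ * X * A) + Eᴴ * X * E) *ᵥ x = p - (‖z‖ : ℂ) ^ 2 * p := by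
    rw [add_mulVec, neg_mulVec, dotProduct_add, dotProduct_neg,
      star_dotProduct_conjTranspose_mul_mul_mulVec_s6, star_dotProduct_conjTranspose_mul_mul_mulVec_s6,
      hxe, star_smul_dotProduct_mulVec_smul, Complex.star_def, Complex.conj_mul', neg_add_eq_sub]
  have hquad_nonneg : 0 ≤ p - (‖z‖ : ℂ) ^ 2 * p := by
    rw [← hquad, ← star_sumElim_zero_dotProduct_fromBlocks_mulVec _ (Cᴴ - Aᴴ * X * B)
      (C - Bᴴ * X * A) (D + Dᴴ - Bᴴ * X * B)]
    exact hKYP.dotProduct_mulVec_nonneg _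
  have hp : p = 0 :=
    eq_zero_of_mul_le_self_of_one_lt (by exact_mod_cast one_lt_pow₀ hz two_ne_zero)
      (hX.dotProduct_mulVec_nonneg _) (sub_nonneg.mp hquad_nonneg)
  have hXEx : X *ᵥ (E *ᵥ x) = 0 := (hX.dotProduct_mulVec_zero_iff _).mp hp
  refine ⟨hXEx, ?_⟩
  have hblock := hKYP.mulVec_eq_zero_of_fromBlocks (x := x) (by rw [hquad, hp, mul_zero, sub_zero])
  rwa [sub_mulVec, ← mulVec_mulVec, ← mulVec_mulVec, hxe, mulVec_smul, hXEx, smul_zero,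
    mulVec_zero, sub_zero] at hblock
end

section
/- Consider a semiexplicit descriptor system: E = [[Σ, 0],[0, 0]] and A = [[A11, A12],[A21, A22]] in block form with Σ ∈ ℂ^{r×r} Hermitian positive definite and A22 ∈ ℂ^{(n−r)×(n−r)} invertible, B = [B1; B2] ∈ ℂ^{n×m}, C = [C1, C2] ∈ ℂ^{m×n}, D ∈ ℂ^{m×m}, and let 𝒜 = Σ^{-1/2}(A11 − A12 A22^{-1} A21)Σ^{-1/2}, ℬ = Σ^{-1/2}(B1 − A12 A22^{-1} B2), 𝒞 = (C1 − C2 A22^{-1} A21)Σ^{-1/2}, 𝒟 = D − C2 A22^{-1} B2 be the reduced standard state-space coefficients. Then for every z ∈ ℂ such that zE − A is invertible, the matrix z I_r − 𝒜 is invertible and C (zE − A)^{-1} B + D = 𝒞 (z I_r − 𝒜)^{-1} ℬ + 𝒟, i.e., the transfer functions of the descriptor system and of the reduced standard state-space system coincide. -/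
open Matrix
open scoped ComplexOrder

/-!
The Schur complement of the invertible block `-A22` in the pencil `zE - A` is
`zΣ - (A11 - A12 A22⁻¹ A21) = S (z I - 𝒜) S` with `S = Σ^{1/2}`. Block elimination expresses
`C (zE - A)⁻¹ B` through the inverse of this Schur complement, `S⁻¹ (z I - 𝒜)⁻¹ S⁻¹`, and the two
outer factors `S⁻¹` are exactly those absorbed into `𝒞` and `ℬ`.
-/

noncomputable def Matrix.PosSemidef.sqrt {n : Type*} [Fintype n] [DecidableEq n] {𝕜 : Type*}
    [RCLike 𝕜] {A : Matrix n n 𝕜} (hA : A.PosSemidef) : Matrix n n 𝕜 :=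
  hA.1.eigenvectorUnitary.1 * diagonal ((↑) ∘ (√·) ∘ hA.1.eigenvalues) *
  (star hA.1.eigenvectorUnitary : Matrix n n 𝕜)

namespace Matrix

section Block

variable {l m n o α : Type*} [Fintype m] [Fintype n] [DecidableEq m] [DecidableEq n] [CommRing α]

theorem inv_neg (A : Matrix n n α) : (-A)⁻¹ = -A⁻¹ := by
  by_cases hA : IsUnit A
  · exact inv_eq_left_inv (by rw [neg_mul_neg, nonsing_inv_mul _ ((isUnit_iff_isUnit_det A).mp hA)])
  · have hnegA : ¬IsUnit (-A) := by rwa [IsUnit.neg_iff]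
    rw [isUnit_iff_isUnit_det] at hA hnegA
    rw [nonsing_inv_apply_not_isUnit _ hA, nonsing_inv_apply_not_isUnit _ hnegA, neg_zero]

theorem isUnit_sub_mul_inv_mul_of_isUnit_fromBlocks {P : Matrix m m α} {Q : Matrix m n α}
    {R : Matrix n m α} {T : Matrix n n α} (hT : IsUnit T) (hM : IsUnit (fromBlocks P Q R T)) :
    IsUnit (P - Q * T⁻¹ * R) := by
  have := hT.invertible
  rwa [isUnit_fromBlocks_iff_of_invertible₂₂, invOf_eq_nonsing_inv] at hM

theorem fromCols_mul_inv_fromBlocks_mul_fromRows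
    {P : Matrix m m α} {Q : Matrix m n α} {R : Matrix n m α} {T : Matrix n n α}
    (hT : IsUnit T) (hM : IsUnit (fromBlocks P Q R T))
    (B₁ : Matrix m l α) (B₂ : Matrix n l α) (C₁ : Matrix o m α) (C₂ : Matrix o n α) :
    fromCols C₁ C₂ * (fromBlocks P Q R T)⁻¹ * fromRows B₁ B₂ =
      (C₁ - C₂ * T⁻¹ * R) * (P - Q * T⁻¹ * R)⁻¹ * (B₁ - Q * T⁻¹ * B₂) + C₂ * T⁻¹ * B₂ := by
  have := hT.invertible
  have := hM.invertible
  have hschur : IsUnit (P - Q * ⅟T * R) := by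
    rw [invOf_eq_nonsing_inv]; exact isUnit_sub_mul_inv_mul_of_isUnit_fromBlocks hT hM
  have := hschur.invertible
  rw [← invOf_eq_nonsing_inv (fromBlocks P Q R T), invOf_fromBlocks₂₂_eq, fromCols_mul_fromBlocks,
    fromCols_mul_fromRows]
  simp only [invOf_eq_nonsing_inv, Matrix.mul_sub, Matrix.sub_mul, Matrix.mul_add, Matrix.add_mul,
    Matrix.mul_neg, Matrix.neg_mul, Matrix.mul_assoc]
  abel

theorem smul_mul_self_sub_eq_mul_mul (S X : Matrix n n α) (hS : IsUnit S) (z : α) :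
    z • (S * S) - X = S * (z • 1 - S⁻¹ * X * S⁻¹) * S := by
  have hdet := (isUnit_iff_isUnit_det S).mp hS
  rw [Matrix.mul_sub, Matrix.sub_mul, Matrix.mul_smul, Matrix.mul_one, Matrix.smul_mul]
  simp only [← Matrix.mul_assoc, mul_nonsing_inv _ hdet, Matrix.one_mul]
  rw [Matrix.mul_assoc, nonsing_inv_mul _ hdet, Matrix.mul_one]

end Block

theorem PosSemidef.sqrt_mul_self {n 𝕜 : Type*} [Fintype n] [DecidableEq n] [RCLike 𝕜]
    {A : Matrix n n 𝕜} (hA : A.PosSemidef) : hA.sqrt * hA.sqrt = A := by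
  set U : Matrix n n 𝕜 := hA.1.eigenvectorUnitary.1
  have hU : star U * U = 1 := Unitary.coe_star_mul_self _
  conv_rhs => rw [hA.1.spectral_theorem, Unitary.conjStarAlgAut_apply]
  rw [sqrt, Matrix.mul_assoc, ← Matrix.mul_assoc (star U), ← Matrix.mul_assoc (star U), hU,
    Matrix.one_mul, ← Matrix.mul_assoc, Matrix.mul_assoc U, diagonal_mul_diagonal]
  congr 3
  funext i
  simp [← RCLike.ofReal_mul, Real.mul_self_sqrt (hA.eigenvalues_nonneg i)]

end Matrix

/-- For a completely causal semiexplicit descriptor system, the transfer function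
coincides with that of the reduced standard state-space system obtained by
eliminating the algebraic variables. -/
theorem semiexplicit_transfer_function_eq
    (r s m : ℕ)
    (Sg : Matrix (Fin r) (Fin r) ℂ) (hSg : Sg.PosDef)
    (A11 : Matrix (Fin r) (Fin r) ℂ) (A12 : Matrix (Fin r) (Fin s) ℂ)
    (A21 : Matrix (Fin s) (Fin r) ℂ) (A22 : Matrix (Fin s) (Fin s) ℂ)
    (hA22 : IsUnit A22)
    (B1 : Matrix (Fin r) (Fin m) ℂ) (B2 : Matrix (Fin s) (Fin m) ℂ)
    (C1 : Matrix (Fin m) (Fin r) ℂ) (C2 : Matrix (Fin m) (Fin s) ℂ)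
    (D : Matrix (Fin m) (Fin m) ℂ)
    (E : Matrix (Fin r ⊕ Fin s) (Fin r ⊕ Fin s) ℂ)
    (hE : E = Matrix.fromBlocks Sg 0 0 0)
    (A : Matrix (Fin r ⊕ Fin s) (Fin r ⊕ Fin s) ℂ)
    (hA : A = Matrix.fromBlocks A11 A12 A21 A22)
    (B : Matrix (Fin r ⊕ Fin s) (Fin m) ℂ) (hB : B = Matrix.fromRows B1 B2)
    (C : Matrix (Fin m) (Fin r ⊕ Fin s) ℂ) (hC : C = Matrix.fromCols C1 C2)
    (S : Matrix (Fin r) (Fin r) ℂ) (hS : S = Matrix.PosSemidef.sqrt hSg.posSemidef)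
    (𝒜 : Matrix (Fin r) (Fin r) ℂ) (h𝒜 : 𝒜 = S⁻¹ * (A11 - A12 * A22⁻¹ * A21) * S⁻¹)
    (ℬ : Matrix (Fin r) (Fin m) ℂ) (hℬ : ℬ = S⁻¹ * (B1 - A12 * A22⁻¹ * B2))
    (𝒞 : Matrix (Fin m) (Fin r) ℂ) (h𝒞 : 𝒞 = (C1 - C2 * A22⁻¹ * A21) * S⁻¹)
    (𝒟 : Matrix (Fin m) (Fin m) ℂ) (h𝒟 : 𝒟 = D - C2 * A22⁻¹ * B2) :
    ∀ z : ℂ, IsUnit (z • E - A) →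
      IsUnit (z • (1 : Matrix (Fin r) (Fin r) ℂ) - 𝒜) ∧
      C * (z • E - A)⁻¹ * B + D
        = 𝒞 * (z • (1 : Matrix (Fin r) (Fin r) ℂ) - 𝒜)⁻¹ * ℬ + 𝒟 := by
  intro z hz
  subst hE hA hB hC h𝒜 hℬ h𝒞 h𝒟
  have hSS : S * S = Sg := hS ▸ hSg.posSemidef.sqrt_mul_self
  have hSu : IsUnit S := isUnit_mul_self_iff.mp (hSS ▸ hSg.isUnit)
  have hpencil : z • fromBlocks Sg 0 0 0 - fromBlocks A11 A12 A21 A22 =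
      fromBlocks (z • Sg - A11) (-A12) (-A21) (-A22) := by
    rw [fromBlocks_smul, sub_eq_add_neg, fromBlocks_neg, fromBlocks_add]
    simp only [smul_zero, ← sub_eq_add_neg, zero_sub]
  rw [hpencil] at hz ⊢
  have hschur : z • Sg - A11 - -A12 * (-A22)⁻¹ * -A21 =
      S * (z • 1 - S⁻¹ * (A11 - A12 * A22⁻¹ * A21) * S⁻¹) * S := by
    rw [← smul_mul_self_sub_eq_mul_mul _ _ hSu, hSS, Matrix.inv_neg]
    simp only [Matrix.neg_mul, Matrix.mul_neg, neg_neg]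
    abel
  have hconj := isUnit_sub_mul_inv_mul_of_isUnit_fromBlocks hA22.neg hz
  rw [hschur] at hconj
  refine ⟨isUnit_of_mul_isUnit_right (isUnit_of_mul_isUnit_left hconj), ?_⟩
  rw [fromCols_mul_inv_fromBlocks_mul_fromRows hA22.neg hz, hschur, Matrix.mul_inv_rev,
    Matrix.mul_inv_rev, Matrix.inv_neg]
  simp only [Matrix.mul_sub, Matrix.sub_mul, Matrix.mul_neg, Matrix.neg_mul, neg_neg,
    Matrix.mul_assoc]
  abel
end

section
/- Consider a semiexplicit descriptor system: E = [[Σ, 0],[0, 0]] and A = [[A11, A12],[A21, A22]] in block form with Σ ∈ ℂ^{r×r} Hermitian positive definite and A22 ∈ ℂ^{(n−r)×(n−r)} invertible, B = [B1; B2] ∈ ℂ^{n×m}, and let 𝒜 = Σ^{-1/2}(A11 − A12 A22^{-1} A21)Σ^{-1/2} and ℬ = Σ^{-1/2}(B1 − A12 A22^{-1} B2) be the reduced coefficients. Then the descriptor system is behaviorally controllable if and only if the reduced standard state-space pair is controllable; that is, rank [λE − A, B] = n for all λ ∈ ℂ if and only if rank [λ I_r − 𝒜, ℬ] = r for all λ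 ∈ ℂ, where [M, N] denotes the matrix obtained by placing the columns of N to the right of M. -/
open Matrix
open scoped ComplexOrder

/-! Eliminating with the invertible pivot `A₂₂` (a Schur complement) gives
`rank [λE - A, B] = (n - r) + rank [λΣ - (A₁₁ - A₁₂A₂₂⁻¹A₂₁), B₁ - A₁₂A₂₂⁻¹B₂]`.
Since `Σ^{-1/2} Σ Σ^{-1/2} = I`, multiplying the second matrix on the left by `Σ^{-1/2}` and its
first block column on the right by `Σ^{-1/2}` turns it into `[λI - 𝒜, ℬ]` without changing
its rank. -/

theorem Submodule.finrank_prod {K V W : Type*} [DivisionRing K] [AddCommGroup V] [Module K V]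
    [AddCommGroup W] [Module K W] (p : Submodule K V) (q : Submodule K W)
    [FiniteDimensional K p] [FiniteDimensional K q] :
    Module.finrank K (p.prod q) = Module.finrank K p + Module.finrank K q := by
  have h : p.prod q = LinearMap.range (p.subtype.prodMap q.subtype) := by
    rw [LinearMap.range_prodMap, Submodule.range_subtype, Submodule.range_subtype]
  rw [h, LinearMap.finrank_range_of_inj, Module.finrank_prod]
  exact Prod.map_injective.mpr ⟨p.injective_subtype, q.injective_subtype⟩

namespace Matrix

variable {K : Type*} [Field K]

theorem rank_fromBlocks_zero_zero {m₁ m₂ n₁ n₂ : Type*} [Fintype n₁] [Fintype n₂]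
    (P : Matrix m₁ n₁ K) (W : Matrix m₂ n₂ K) :
    (fromBlocks P 0 0 W).rank = P.rank + W.rank := by
  have h : (fromBlocks P 0 0 W).mulVecLin =
      (LinearEquiv.sumArrowLequivProdArrow m₁ m₂ K K).symm.toLinearMap ∘ₗ
        (P.mulVecLin.prodMap W.mulVecLin) ∘ₗ
          (LinearEquiv.sumArrowLequivProdArrow n₁ n₂ K K).toLinearMap := by
    ext x i
    cases i <;> simp [fromBlocks_mulVec, LinearEquiv.sumArrowLequivProdArrow,
      Equiv.sumArrowEquivProdArrow]
  rw [rank, h, LinearMap.range_comp, LinearMap.range_comp_of_range_eq_top _ (LinearEquiv.range _),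
    LinearEquiv.finrank_map_eq, LinearMap.range_prodMap, Submodule.finrank_prod]
  rfl

theorem rank_fromBlocks_of_isUnit₂₂ {l m n : Type*} [Fintype l] [Fintype m] [Fintype n]
    [DecidableEq l] [DecidableEq m] [DecidableEq n]
    (A : Matrix l m K) (B : Matrix l n K) (C : Matrix n m K) (D : Matrix n n K) (hD : IsUnit D) :
    (fromBlocks A B C D).rank = Fintype.card n + (A - B * D⁻¹ * C).rank := by
  let _ := invertibleOfIsUnitDet D ((isUnit_iff_isUnit_det D).mp hD)
  rw [fromBlocks_eq_of_invertible₂₂, rank_mul_eq_left_of_isUnit_det,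
    rank_mul_eq_right_of_isUnit_det, rank_fromBlocks_zero_zero, rank_of_isUnit D hD,
    invOf_eq_nonsing_inv, add_comm]
  all_goals simp

theorem rank_fromCols_fromBlocks_fromRows {l m n p : Type*} [Fintype l] [Fintype m] [Fintype n]
    [Fintype p] [DecidableEq l] [DecidableEq m] [DecidableEq n] [DecidableEq p]
    (P : Matrix l m K) (Q : Matrix l n K) (R : Matrix n m K) (W : Matrix n n K)
    (Y : Matrix l p K) (Z : Matrix n p K) (hW : IsUnit W) :
    (fromCols (fromBlocks P Q R W) (fromRows Y Z)).rank =
      Fintype.card n + (fromCols (P - Q * W⁻¹ * R) (Y - Q * W⁻¹ * Z)).rank := by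
  let e : (m ⊕ p) ⊕ n ≃ (m ⊕ n) ⊕ p :=
    (Equiv.sumAssoc _ _ _).trans ((Equiv.sumCongr (.refl _) (.sumComm _ _)).trans
      (Equiv.sumAssoc _ _ _).symm)
  have h : (fromCols (fromBlocks P Q R W) (fromRows Y Z)).submatrix id e =
      fromBlocks (fromCols P Y) Q (fromCols R Z) W := by
    ext (i | i) ((j | j) | j) <;> rfl
  rw [← rank_submatrix _ (.refl _) e, Equiv.coe_refl, h, rank_fromBlocks_of_isUnit₂₂ _ _ _ _ hW,
    mul_fromCols]
  congr 2
  ext i (j | j) <;> rfl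

theorem rank_fromCols_mul_mul {m n p : Type*} [Fintype m] [Fintype n] [Fintype p]
    [DecidableEq m] [DecidableEq n] [DecidableEq p]
    (M : Matrix m m K) (X : Matrix m n K) (N : Matrix n n K) (Y : Matrix m p K)
    (hM : IsUnit M.det) (hN : IsUnit N.det) :
    (fromCols (M * X * N) (M * Y)).rank = (fromCols X Y).rank := by
  have h : fromCols (M * X * N) (M * Y) =
      M * fromCols X Y *
        fromBlocks N (0 : Matrix n p K) (0 : Matrix p n K) (1 : Matrix p p K) := by
    rw [mul_fromCols, fromCols_mul_fromBlocks]
    simp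
  rw [h, rank_mul_eq_left_of_isUnit_det, rank_mul_eq_right_of_isUnit_det _ _ hM]
  simpa [det_fromBlocks_zero₂₁] using hN

theorem PosSemidef.cfc_sqrt_mul_self {n 𝕜 : Type*} [Fintype n] [DecidableEq n] [RCLike 𝕜]
    {A : Matrix n n 𝕜} (hA : A.PosSemidef) :
    hA.1.cfc Real.sqrt * hA.1.cfc Real.sqrt = A := by
  rw [← hA.1.cfc_eq, ← cfc_mul _ _ A]
  conv_rhs => rw [← cfc_id' ℝ A hA.1]
  refine cfc_congr fun x hx => Real.mul_self_sqrt ?_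
  obtain ⟨i, rfl⟩ := hA.1.spectrum_real_eq_range_eigenvalues ▸ hx
  exact hA.eigenvalues_nonneg i

end Matrix

/-- A semiexplicit descriptor system is behaviorally controllable iff the reduced
standard state-space pair `(𝒜, ℬ)` is controllable. -/
theorem semiexplicit_behavioral_controllability
    (r s m : ℕ)
    (Sg : Matrix (Fin r) (Fin r) ℂ) (hSg : Sg.PosDef)
    (A11 : Matrix (Fin r) (Fin r) ℂ) (A12 : Matrix (Fin r) (Fin s) ℂ)
    (A21 : Matrix (Fin s) (Fin r) ℂ) (A22 : Matrix (Fin s) (Fin s) ℂ)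
    (hA22 : IsUnit A22)
    (B1 : Matrix (Fin r) (Fin m) ℂ) (B2 : Matrix (Fin s) (Fin m) ℂ)
    (E : Matrix (Fin r ⊕ Fin s) (Fin r ⊕ Fin s) ℂ)
    (hE : E = Matrix.fromBlocks Sg 0 0 0)
    (A : Matrix (Fin r ⊕ Fin s) (Fin r ⊕ Fin s) ℂ)
    (hA : A = Matrix.fromBlocks A11 A12 A21 A22)
    (B : Matrix (Fin r ⊕ Fin s) (Fin m) ℂ) (hB : B = Matrix.fromRows B1 B2)
    (S : Matrix (Fin r) (Fin r) ℂ) (hS : S = (hSg.posSemidef.1.eigenvectorUnitary : Matrix (Fin r) (Fin r) ℂ) *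
      Matrix.diagonal ((↑) ∘ (Real.sqrt ·) ∘ hSg.posSemidef.1.eigenvalues) *
      (star hSg.posSemidef.1.eigenvectorUnitary : Matrix (Fin r) (Fin r) ℂ))
    (𝒜 : Matrix (Fin r) (Fin r) ℂ) (h𝒜 : 𝒜 = S⁻¹ * (A11 - A12 * A22⁻¹ * A21) * S⁻¹)
    (ℬ : Matrix (Fin r) (Fin m) ℂ) (hℬ : ℬ = S⁻¹ * (B1 - A12 * A22⁻¹ * B2)) :
    (∀ lam : ℂ, (Matrix.fromCols (lam • E - A) B).rank = r + s)
    ↔ (∀ lam : ℂ,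
        (Matrix.fromCols (lam • (1 : Matrix (Fin r) (Fin r) ℂ) - 𝒜) ℬ).rank = r) := by
  -- `S` is `IsHermitian.cfc Real.sqrt` unfolded, i.e. `Σ^{1/2}`.
  have hS_sq : S * S = Sg := hS ▸ hSg.posSemidef.cfc_sqrt_mul_self
  have hS_det : IsUnit S.det :=
    (IsUnit.mul_iff.mp (det_mul S S ▸ hS_sq ▸ (isUnit_iff_isUnit_det Sg).mp hSg.isUnit)).1
  have hSg_normal : S⁻¹ * Sg * S⁻¹ = 1 := by
    rw [← hS_sq, ← Matrix.mul_assoc, nonsing_inv_mul _ hS_det, Matrix.one_mul,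
      mul_nonsing_inv _ hS_det]
  have hA22_neg : (-A22)⁻¹ = -A22⁻¹ := inv_eq_right_inv <| by
    rw [neg_mul_neg, mul_nonsing_inv _ ((isUnit_iff_isUnit_det A22).mp hA22)]
  have h_rank (lam : ℂ) : (fromCols (lam • E - A) B).rank =
      s + (fromCols (lam • (1 : Matrix (Fin r) (Fin r) ℂ) - 𝒜) ℬ).rank := by
    have h_pencil : lam • E - A = fromBlocks (lam • Sg - A11) (-A12) (-A21) (-A22) := by
      rw [hE, hA]
      ext (i | i) (j | j) <;> simp
    have h_reduced : lam • (1 : Matrix (Fin r) (Fin r) ℂ) - 𝒜 =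
        S⁻¹ * (lam • Sg - (A11 - A12 * A22⁻¹ * A21)) * S⁻¹ := by
      rw [Matrix.mul_sub, Matrix.sub_mul, Matrix.mul_smul, Matrix.smul_mul, hSg_normal, h𝒜]
    rw [h_pencil, hB, rank_fromCols_fromBlocks_fromRows _ _ _ _ _ _ hA22.neg, h_reduced, hℬ,
      rank_fromCols_mul_mul _ _ _ _ (isUnit_nonsing_inv_det _ hS_det)
        (isUnit_nonsing_inv_det _ hS_det), Fintype.card_fin, hA22_neg]
    simp only [Matrix.neg_mul, Matrix.mul_neg, neg_neg, sub_neg_eq_add,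
      sub_add_eq_add_sub, sub_sub_eq_add_sub]
  exact forall_congr' fun lam => by rw [h_rank lam]; omega
end

section
/- Consider a semiexplicit descriptor system: E = [[Σ, 0],[0, 0]] and A = [[A11, A12],[A21, A22]] in block form with Σ ∈ ℂ^{r×r} Hermitian positive definite and A22 ∈ ℂ^{(n−r)×(n−r)} invertible, B = [B1; B2] ∈ ℂ^{n×m}, C = [C1, C2] ∈ ℂ^{m×n}, D ∈ ℂ^{m×m}, and let 𝒜 = Σ^{-1/2}(A11 − A12 A22^{-1} A21)Σ^{-1/2}, ℬ = Σ^{-1/2}(B1 − A12 A22^{-1} B2), 𝒞 = (C1 − C2 A22^{-1} A21)Σ^{-1/2}, 𝒟 = D − C2 A22^{-1} B2. Then the following are equivalent: (i) there exists a Hermitian positive semidefinite X ∈ ℂ^{n×n} such that for all x¹ ∈ ℂ^r and u ∈ ℂ^m, setting x := (x¹, −A22^{-1}(A21 x¹ + B2 u)) ∈ ℂ^n and y := C x + D u, the inequality (A x + B u)^H X (A x + B u) − (E x)^H X (E x) ≤ 2 Re(u^H y) holds; (ii) there exists a Hermitian positive semidefinite 𝒳 ∈ ℂ^{r×r} such that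 the block matrix [[−𝒜^H 𝒳 𝒜 + 𝒳, 𝒞^H − 𝒜^H 𝒳 ℬ], [𝒞 − ℬ^H 𝒳 𝒜, 𝒟 + 𝒟^H − ℬ^H 𝒳 ℬ]] is positive semidefinite. Moreover, in the direction (i) ⇒ (ii), one may take 𝒳 = Σ^{1/2} X11 Σ^{1/2} where X11 is the upper-left r×r block of X. -/
open Matrix
open scoped ComplexOrder

set_option maxHeartbeats 1000000 in
lemma dot_triple' {n m p q : Type*} [Fintype n] [Fintype m] [Fintype p] [Fintype q]
    (A : Matrix p n ℂ) (M : Matrix p q ℂ) (B : Matrix q m ℂ) (x : n → ℂ) (y : m → ℂ) :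
    star x ⬝ᵥ ((Aᴴ * M * B) *ᵥ y) = star (A *ᵥ x) ⬝ᵥ (M *ᵥ (B *ᵥ y)) := by
  simp [star_mulVec, dotProduct_mulVec, vecMul_vecMul, Matrix.mul_assoc]

set_option maxHeartbeats 1000000 in
lemma key_quad' {r m : ℕ} (𝒳 𝒜 : Matrix (Fin r) (Fin r) ℂ) (ℬ : Matrix (Fin r) (Fin m) ℂ)
    (𝒞 : Matrix (Fin m) (Fin r) ℂ) (𝒟 : Matrix (Fin m) (Fin m) ℂ) (z : Fin r → ℂ) (u : Fin m → ℂ) :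
    star (Sum.elim z u) ⬝ᵥ ((Matrix.fromBlocks
          (-(𝒜ᴴ * 𝒳 * 𝒜) + 𝒳) (𝒞ᴴ - 𝒜ᴴ * 𝒳 * ℬ)
          (𝒞 - ℬᴴ * 𝒳 * 𝒜) (𝒟 + 𝒟ᴴ - ℬᴴ * 𝒳 * ℬ)) *ᵥ Sum.elim z u)
    = star z ⬝ᵥ (𝒳 *ᵥ z) - star (𝒜 *ᵥ z + ℬ *ᵥ u) ⬝ᵥ (𝒳 *ᵥ (𝒜 *ᵥ z + ℬ *ᵥ u))
      + (star u ⬝ᵥ (𝒞 *ᵥ z + 𝒟 *ᵥ u) + star (star u ⬝ᵥ (𝒞 *ᵥ z + 𝒟 *ᵥ u))) := by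
  have h1 := dot_triple' 𝒜 𝒳 𝒜 z z
  have h2 := dot_triple' 𝒜 𝒳 ℬ z u
  have h3 := dot_triple' ℬ 𝒳 𝒜 u z
  have h4 := dot_triple' ℬ 𝒳 ℬ u u
  have h5 : star z ⬝ᵥ (𝒞ᴴ *ᵥ u) = star (𝒞 *ᵥ z) ⬝ᵥ u := by
    rw [dotProduct_mulVec, ← star_mulVec]
  have h7 : star u ⬝ᵥ (𝒟ᴴ *ᵥ u) = star (𝒟 *ᵥ u) ⬝ᵥ u := by
    rw [dotProduct_mulVec, ← star_mulVec]
  have h6 : star (star u ⬝ᵥ (𝒞 *ᵥ z + 𝒟 *ᵥ u)) = star (𝒞 *ᵥ z + 𝒟 *ᵥ u) ⬝ᵥ u := by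
    rw [star_dotProduct, star_star]
  rw [h6]
  simp only [fromBlocks_mulVec, Function.star_sumElim, sumElim_dotProduct_sumElim,
    Sum.elim_comp_inl, Sum.elim_comp_inr, add_mulVec, sub_mulVec, neg_mulVec,
    dotProduct_add, dotProduct_sub, dotProduct_neg, mulVec_add, star_add,
    add_dotProduct]
  simp only [h1, h2, h3, h4, h5, h7]
  ring

lemma sum_elim_add_sum_elim {α β : Type*} (a c : α → ℂ) (b d : β → ℂ) :
    Sum.elim a b + Sum.elim c d = Sum.elim (a + c) (b + d) := by
  funext i; cases i <;> simp

lemma quad_block_vec {r s : ℕ} (X : Matrix (Fin r ⊕ Fin s) (Fin r ⊕ Fin s) ℂ)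
    (w : Fin r → ℂ) :
    star (Sum.elim w (0 : Fin s → ℂ)) ⬝ᵥ (X *ᵥ Sum.elim w 0)
      = star w ⬝ᵥ (X.toBlocks₁₁ *ᵥ w) := by
  conv_lhs => rw [← fromBlocks_toBlocks X]
  simp [fromBlocks_mulVec, Function.star_sumElim, sumElim_dotProduct_sumElim]


/-- For a semiexplicit index-one descriptor system, impedance passivity with a
quadratic storage function (d-iPa) is equivalent to solvability of the discrete-time
impedance KYP inequality (d-iKYP) for the reduced standard state-space system
`(I_r, 𝒜, ℬ, 𝒞, 𝒟)`; moreover, from a storage matrix `X` one may take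
`𝒳 = Σ^{1/2} X₁₁ Σ^{1/2}`. -/
theorem semiexplicit_diPa_iff_reduced_diKYP
    (r s m : ℕ)
    (Sg : Matrix (Fin r) (Fin r) ℂ) (hSg : Sg.PosDef)
    (A11 : Matrix (Fin r) (Fin r) ℂ) (A12 : Matrix (Fin r) (Fin s) ℂ)
    (A21 : Matrix (Fin s) (Fin r) ℂ) (A22 : Matrix (Fin s) (Fin s) ℂ)
    (hA22 : IsUnit A22)
    (B1 : Matrix (Fin r) (Fin m) ℂ) (B2 : Matrix (Fin s) (Fin m) ℂ)
    (C1 : Matrix (Fin m) (Fin r) ℂ) (C2 : Matrix (Fin m) (Fin s) ℂ)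
    (D : Matrix (Fin m) (Fin m) ℂ)
    (E : Matrix (Fin r ⊕ Fin s) (Fin r ⊕ Fin s) ℂ)
    (hE : E = Matrix.fromBlocks Sg 0 0 0)
    (A : Matrix (Fin r ⊕ Fin s) (Fin r ⊕ Fin s) ℂ)
    (hA : A = Matrix.fromBlocks A11 A12 A21 A22)
    (B : Matrix (Fin r ⊕ Fin s) (Fin m) ℂ) (hB : B = Matrix.fromRows B1 B2)
    (C : Matrix (Fin m) (Fin r ⊕ Fin s) ℂ) (hC : C = Matrix.fromCols C1 C2)
    (S : Matrix (Fin r) (Fin r) ℂ) (hS : S = hSg.posSemidef.isHermitian.eigenvectorUnitary.1 *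
      diagonal (((↑) : ℝ → ℂ) ∘ (√·) ∘ hSg.posSemidef.isHermitian.eigenvalues) *
      (star hSg.posSemidef.isHermitian.eigenvectorUnitary : Matrix (Fin r) (Fin r) ℂ))
    (𝒜 : Matrix (Fin r) (Fin r) ℂ) (h𝒜 : 𝒜 = S⁻¹ * (A11 - A12 * A22⁻¹ * A21) * S⁻¹)
    (ℬ : Matrix (Fin r) (Fin m) ℂ) (hℬ : ℬ = S⁻¹ * (B1 - A12 * A22⁻¹ * B2))
    (𝒞 : Matrix (Fin m) (Fin r) ℂ) (h𝒞 : 𝒞 = (C1 - C2 * A22⁻¹ * A21) * S⁻¹)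
    (𝒟 : Matrix (Fin m) (Fin m) ℂ) (h𝒟 : 𝒟 = D - C2 * A22⁻¹ * B2) :
    ((∃ X : Matrix (Fin r ⊕ Fin s) (Fin r ⊕ Fin s) ℂ, X.PosSemidef ∧
        ∀ (x1 : Fin r → ℂ) (u : Fin m → ℂ) (xv : Fin r ⊕ Fin s → ℂ),
          xv = Sum.elim x1 (-(A22⁻¹ *ᵥ (A21 *ᵥ x1 + B2 *ᵥ u))) →
          (star (A *ᵥ xv + B *ᵥ u) ⬝ᵥ (X *ᵥ (A *ᵥ xv + B *ᵥ u))).re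
            - (star (E *ᵥ xv) ⬝ᵥ (X *ᵥ (E *ᵥ xv))).re
            ≤ 2 * (star u ⬝ᵥ (C *ᵥ xv + D *ᵥ u)).re)
      ↔
      (∃ 𝒳 : Matrix (Fin r) (Fin r) ℂ, 𝒳.PosSemidef ∧
        (Matrix.fromBlocks
          (-(𝒜ᴴ * 𝒳 * 𝒜) + 𝒳) (𝒞ᴴ - 𝒜ᴴ * 𝒳 * ℬ)
          (𝒞 - ℬᴴ * 𝒳 * 𝒜) (𝒟 + 𝒟ᴴ - ℬᴴ * 𝒳 * ℬ)).PosSemidef))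
    ∧
    (∀ X : Matrix (Fin r ⊕ Fin s) (Fin r ⊕ Fin s) ℂ, X.PosSemidef →
      (∀ (x1 : Fin r → ℂ) (u : Fin m → ℂ) (xv : Fin r ⊕ Fin s → ℂ),
          xv = Sum.elim x1 (-(A22⁻¹ *ᵥ (A21 *ᵥ x1 + B2 *ᵥ u))) →
          (star (A *ᵥ xv + B *ᵥ u) ⬝ᵥ (X *ᵥ (A *ᵥ xv + B *ᵥ u))).re
            - (star (E *ᵥ xv) ⬝ᵥ (X *ᵥ (E *ᵥ xv))).re
            ≤ 2 * (star u ⬝ᵥ (C *ᵥ xv + D *ᵥ u)).re) →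
      ((S * X.toBlocks₁₁ * S).PosSemidef ∧
        (Matrix.fromBlocks
          (-(𝒜ᴴ * (S * X.toBlocks₁₁ * S) * 𝒜) + (S * X.toBlocks₁₁ * S))
          (𝒞ᴴ - 𝒜ᴴ * (S * X.toBlocks₁₁ * S) * ℬ)
          (𝒞 - ℬᴴ * (S * X.toBlocks₁₁ * S) * 𝒜)
          (𝒟 + 𝒟ᴴ - ℬᴴ * (S * X.toBlocks₁₁ * S) * ℬ)).PosSemidef)) := by
  -- basic facts about S and A22
  have hSboth : S.PosSemidef ∧ S * S = Sg := by
    have hcfc : S = cfc (√·) Sg := by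
      rw [hSg.posSemidef.isHermitian.cfc_eq, hS]
      simp [IsHermitian.cfc, Unitary.conjStarAlgAut_apply]
    constructor
    · have h := (PosSemidef.diagonal (R := ℂ) (n := Fin r)
        (d := ((↑) : ℝ → ℂ) ∘ (√·) ∘ hSg.posSemidef.isHermitian.eigenvalues)
        (fun i => by simp [Complex.zero_le_real, Real.sqrt_nonneg])).mul_mul_conjTranspose_same
        hSg.posSemidef.isHermitian.eigenvectorUnitary.1
      rw [hS]
      simpa [Matrix.star_eq_conjTranspose] using h
    · have hsa : IsSelfAdjoint Sg := hSg.isHermitian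
      rw [hcfc, ← cfc_mul (fun x => √x) (fun x => √x) Sg]
      conv_rhs => rw [← cfc_id' ℝ Sg]
      refine cfc_congr fun x hx => ?_
      have : 0 ≤ x := by
        open scoped MatrixOrder in
        have := hSg.posSemidef
        open scoped MatrixOrder in
        rw [← Matrix.nonneg_iff_posSemidef] at this
        open scoped MatrixOrder in
        exact spectrum_nonneg_of_nonneg this hx
      simp [Real.mul_self_sqrt this]
  have hSpsd : S.PosSemidef := hSboth.1
  have hSH : Sᴴ = S := hSpsd.isHermitian
  have hSS : S * S = Sg := hSboth.2
  have hSdet : IsUnit S.det := by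
    have h := (Matrix.isUnit_iff_isUnit_det _).mp hSg.isUnit
    rw [← hSS, Matrix.det_mul] at h
    exact isUnit_of_mul_isUnit_left h
  have hSiS : S⁻¹ * S = 1 := Matrix.nonsing_inv_mul S hSdet
  have hSSi : S * S⁻¹ = 1 := Matrix.mul_nonsing_inv S hSdet
  have hSiH : S⁻¹ᴴ = S⁻¹ := by rw [Matrix.conjTranspose_nonsing_inv, hSH]
  have hA22det : IsUnit A22.det := (Matrix.isUnit_iff_isUnit_det _).mp hA22
  have hA22i : A22 * A22⁻¹ = 1 := Matrix.mul_nonsing_inv _ hA22det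
  -- structural identities
  have hSAS : S * 𝒜 * S = A11 - A12 * A22⁻¹ * A21 := by
    rw [h𝒜]
    simp only [Matrix.mul_assoc, hSiS, Matrix.mul_one]
    rw [← Matrix.mul_assoc, hSSi, Matrix.one_mul]
  have hSB : S * ℬ = B1 - A12 * A22⁻¹ * B2 := by
    rw [hℬ, ← Matrix.mul_assoc, hSSi, Matrix.one_mul]
  have hCS : 𝒞 * S = C1 - C2 * A22⁻¹ * A21 := by
    rw [h𝒞, Matrix.mul_assoc, hSiS, Matrix.mul_one]
  have hsand : ∀ M : Matrix (Fin r) (Fin r) ℂ, S * (S⁻¹ * M * S⁻¹) * S = M := by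
    intro M
    simp only [Matrix.mul_assoc, hSiS, Matrix.mul_one]
    rw [← Matrix.mul_assoc, hSSi, Matrix.one_mul]
  have hqX : ∀ (M : Matrix (Fin r) (Fin r) ℂ) (a b : Fin r → ℂ),
      star (S *ᵥ a) ⬝ᵥ (M *ᵥ (S *ᵥ b)) = star a ⬝ᵥ ((S * M * S) *ᵥ b) := by
    intro M a b
    have h := dot_triple' S M S a b
    rw [hSH] at h
    exact h.symm
  -- the three key vector computations
  have hcomp : ∀ (x1 : Fin r → ℂ) (u : Fin m → ℂ),
      A *ᵥ Sum.elim x1 (-(A22⁻¹ *ᵥ (A21 *ᵥ x1 + B2 *ᵥ u))) + B *ᵥ u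
          = Sum.elim (S *ᵥ (𝒜 *ᵥ (S *ᵥ x1) + ℬ *ᵥ u)) 0
        ∧ E *ᵥ Sum.elim x1 (-(A22⁻¹ *ᵥ (A21 *ᵥ x1 + B2 *ᵥ u)))
          = Sum.elim (S *ᵥ (S *ᵥ x1)) 0
        ∧ C *ᵥ Sum.elim x1 (-(A22⁻¹ *ᵥ (A21 *ᵥ x1 + B2 *ᵥ u))) + D *ᵥ u
          = 𝒞 *ᵥ (S *ᵥ x1) + 𝒟 *ᵥ u := by
    intro x1 u
    set x2 : Fin s → ℂ := -(A22⁻¹ *ᵥ (A21 *ᵥ x1 + B2 *ᵥ u)) with hx2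
    have hA12x2 : A12 *ᵥ x2 = -((A12 * A22⁻¹ * A21) *ᵥ x1) - (A12 * A22⁻¹ * B2) *ᵥ u := by
      rw [hx2]
      simp only [mulVec_neg, Matrix.mulVec_mulVec, mulVec_add, ← Matrix.mul_assoc]
      abel
    have hC2x2 : C2 *ᵥ x2 = -((C2 * A22⁻¹ * A21) *ᵥ x1) - (C2 * A22⁻¹ * B2) *ᵥ u := by
      rw [hx2]
      simp only [mulVec_neg, Matrix.mulVec_mulVec, mulVec_add, ← Matrix.mul_assoc]
      abel
    have hlow : A21 *ᵥ x1 + A22 *ᵥ x2 + B2 *ᵥ u = 0 := by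
      rw [hx2, mulVec_neg, Matrix.mulVec_mulVec, hA22i, Matrix.one_mulVec]
      abel
    have hup : A11 *ᵥ x1 + A12 *ᵥ x2 + B1 *ᵥ u = S *ᵥ (𝒜 *ᵥ (S *ᵥ x1) + ℬ *ᵥ u) := by
      have hr : S *ᵥ (𝒜 *ᵥ (S *ᵥ x1) + ℬ *ᵥ u)
          = (A11 - A12 * A22⁻¹ * A21) *ᵥ x1 + (B1 - A12 * A22⁻¹ * B2) *ᵥ u := by
        rw [mulVec_add]
        simp only [Matrix.mulVec_mulVec]
        rw [← Matrix.mul_assoc, hSAS, hSB]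
      rw [hr, sub_mulVec, sub_mulVec, hA12x2]
      abel
    refine ⟨?_, ?_, ?_⟩
    · rw [hA, hB, fromBlocks_mulVec, fromRows_mulVec]
      simp only [Sum.elim_comp_inl, Sum.elim_comp_inr]
      rw [sum_elim_add_sum_elim, hup, hlow]
    · rw [hE, fromBlocks_mulVec]
      simp only [Sum.elim_comp_inl, Sum.elim_comp_inr, Matrix.zero_mulVec, add_zero, zero_add]
      rw [Matrix.mulVec_mulVec, hSS]
    · have hy : 𝒞 *ᵥ (S *ᵥ x1) + 𝒟 *ᵥ u
          = (C1 - C2 * A22⁻¹ * A21) *ᵥ x1 + (D - C2 * A22⁻¹ * B2) *ᵥ u := by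
        rw [Matrix.mulVec_mulVec, hCS, h𝒟]
      rw [hC, fromCols_mulVec_sumElim, hy, sub_mulVec, sub_mulVec, hC2x2]
      abel
  -- forward direction (also gives the "moreover" part)
  have forward : ∀ X : Matrix (Fin r ⊕ Fin s) (Fin r ⊕ Fin s) ℂ, X.PosSemidef →
      (∀ (x1 : Fin r → ℂ) (u : Fin m → ℂ) (xv : Fin r ⊕ Fin s → ℂ),
          xv = Sum.elim x1 (-(A22⁻¹ *ᵥ (A21 *ᵥ x1 + B2 *ᵥ u))) →
          (star (A *ᵥ xv + B *ᵥ u) ⬝ᵥ (X *ᵥ (A *ᵥ xv + B *ᵥ u))).re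
            - (star (E *ᵥ xv) ⬝ᵥ (X *ᵥ (E *ᵥ xv))).re
            ≤ 2 * (star u ⬝ᵥ (C *ᵥ xv + D *ᵥ u)).re) →
      ((S * X.toBlocks₁₁ * S).PosSemidef ∧
        (Matrix.fromBlocks
          (-(𝒜ᴴ * (S * X.toBlocks₁₁ * S) * 𝒜) + (S * X.toBlocks₁₁ * S))
          (𝒞ᴴ - 𝒜ᴴ * (S * X.toBlocks₁₁ * S) * ℬ)
          (𝒞 - ℬᴴ * (S * X.toBlocks₁₁ * S) * 𝒜)
          (𝒟 + 𝒟ᴴ - ℬᴴ * (S * X.toBlocks₁₁ * S) * ℬ)).PosSemidef) := by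
    intro X hX hineq
    have h11 : (X.toBlocks₁₁).PosSemidef := by
      have h : X.toBlocks₁₁ = X.submatrix Sum.inl Sum.inl := rfl
      rw [h]
      exact hX.submatrix _
    have hYpsd : (S * X.toBlocks₁₁ * S).PosSemidef := by
      have h := h11.conjTranspose_mul_mul_same S
      rwa [hSH] at h
    refine ⟨hYpsd, PosSemidef.of_dotProduct_mulVec_nonneg ?_ ?_⟩
    · -- Hermitian
      have hXH : X.toBlocks₁₁ᴴ = X.toBlocks₁₁ := h11.isHermitian
      show _ᴴ = _
      rw [fromBlocks_conjTranspose]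
      simp only [conjTranspose_add, conjTranspose_sub, conjTranspose_neg, conjTranspose_mul,
        conjTranspose_conjTranspose, hXH, hSH, Matrix.mul_assoc]
      rw [add_comm 𝒟ᴴ 𝒟]
    · intro v
      have hv : v = Sum.elim (v ∘ Sum.inl) (v ∘ Sum.inr) := (Sum.elim_comp_inl_inr v).symm
      set z := v ∘ Sum.inl with hz
      set u := v ∘ Sum.inr with hu
      rw [hv, key_quad']
      have hx1 : S *ᵥ (S⁻¹ *ᵥ z) = z := by
        rw [Matrix.mulVec_mulVec, hSSi, Matrix.one_mulVec]
      obtain ⟨hA', hE', hC'⟩ := hcomp (S⁻¹ *ᵥ z) u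
      have hkey := hineq (S⁻¹ *ᵥ z) u _ rfl
      rw [hA', hE', hC', hx1, quad_block_vec, quad_block_vec, hqX, hqX] at hkey
      have him1 : (star z ⬝ᵥ ((S * X.toBlocks₁₁ * S) *ᵥ z)).im = 0 :=
        ((Complex.le_def.mp (hYpsd.dotProduct_mulVec_nonneg z)).2).symm
      have him2 : (star (𝒜 *ᵥ z + ℬ *ᵥ u) ⬝ᵥ ((S * X.toBlocks₁₁ * S) *ᵥ (𝒜 *ᵥ z + ℬ *ᵥ u))).im = 0 :=
        ((Complex.le_def.mp (hYpsd.dotProduct_mulVec_nonneg _)).2).symm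
      rw [Complex.le_def]
      constructor
      · simp only [Complex.add_re, Complex.sub_re, Complex.zero_re, Complex.star_def,
          Complex.conj_re]
        linarith
      · simp only [Complex.add_im, Complex.sub_im, Complex.zero_im, Complex.star_def,
          Complex.conj_im, him1, him2]
        ring
  -- backward direction
  have backward : (∃ 𝒳 : Matrix (Fin r) (Fin r) ℂ, 𝒳.PosSemidef ∧
        (Matrix.fromBlocks
          (-(𝒜ᴴ * 𝒳 * 𝒜) + 𝒳) (𝒞ᴴ - 𝒜ᴴ * 𝒳 * ℬ)
          (𝒞 - ℬᴴ * 𝒳 * 𝒜) (𝒟 + 𝒟ᴴ - ℬᴴ * 𝒳 * ℬ)).PosSemidef) →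
      (∃ X : Matrix (Fin r ⊕ Fin s) (Fin r ⊕ Fin s) ℂ, X.PosSemidef ∧
        ∀ (x1 : Fin r → ℂ) (u : Fin m → ℂ) (xv : Fin r ⊕ Fin s → ℂ),
          xv = Sum.elim x1 (-(A22⁻¹ *ᵥ (A21 *ᵥ x1 + B2 *ᵥ u))) →
          (star (A *ᵥ xv + B *ᵥ u) ⬝ᵥ (X *ᵥ (A *ᵥ xv + B *ᵥ u))).re
            - (star (E *ᵥ xv) ⬝ᵥ (X *ᵥ (E *ᵥ xv))).re
            ≤ 2 * (star u ⬝ᵥ (C *ᵥ xv + D *ᵥ u)).re) := by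
    rintro ⟨𝒳, h𝒳, hK⟩
    have hred : ∀ a : Fin r → ℂ,
        star (S *ᵥ a) ⬝ᵥ ((S⁻¹ * 𝒳 * S⁻¹) *ᵥ (S *ᵥ a)) = star a ⬝ᵥ (𝒳 *ᵥ a) := by
      intro a
      rw [hqX, hsand]
    refine ⟨Matrix.fromBlocks (S⁻¹ * 𝒳 * S⁻¹) 0 0 0, PosSemidef.of_dotProduct_mulVec_nonneg ?_ ?_, ?_⟩
    · show _ᴴ = _
      rw [fromBlocks_conjTranspose]
      simp only [conjTranspose_mul, hSiH, conjTranspose_zero, Matrix.mul_assoc,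
        h𝒳.isHermitian.eq]
    · intro v
      obtain ⟨z, u, rfl⟩ : ∃ z u, v = Sum.elim z u :=
        ⟨_, _, (Sum.elim_comp_inl_inr v).symm⟩
      simp only [fromBlocks_mulVec, Function.star_sumElim, sumElim_dotProduct_sumElim,
        Sum.elim_comp_inl, Sum.elim_comp_inr, Matrix.zero_mulVec, add_zero, zero_add,
        dotProduct_zero]
      have h := dot_triple' S⁻¹ 𝒳 S⁻¹ z z
      rw [hSiH] at h
      rw [h]
      exact h𝒳.dotProduct_mulVec_nonneg _
    · intro x1 u xv hxv
      obtain ⟨hA', hE', hC'⟩ := hcomp x1 u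
      subst hxv
      rw [hA', hE', hC', quad_block_vec, quad_block_vec, Matrix.toBlocks_fromBlocks₁₁,
        hred, hred]
      have h0 := hK.dotProduct_mulVec_nonneg (Sum.elim (S *ᵥ x1) u)
      rw [key_quad'] at h0
      have hre := (Complex.le_def.mp h0).1
      simp only [Complex.zero_re, Complex.add_re, Complex.sub_re, Complex.star_def,
        Complex.conj_re] at hre
      linarith
  exact ⟨⟨fun ⟨X, hX, hineq⟩ =>
      ⟨S * X.toBlocks₁₁ * S, (forward X hX hineq).1, (forward X hX hineq).2⟩, backward⟩, forward⟩
end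

section
/- Let E, A_I ∈ ℂ^{n×n}, B_I ∈ ℂ^{n×m}, C_I ∈ ℂ^{m×n}, D_I ∈ ℂ^{m×m} with I_m + D_I invertible, and define the external Cayley transform A_S = A_I − B_I (I_m + D_I)^{-1} C_I, B_S = √2 · B_I (I_m + D_I)^{-1}, C_S = −√2 · (I_m + D_I)^{-1} C_I, D_S = −(I_m + D_I)^{-1}(D_I − I_m). Then: (a) for all x, x⁺ ∈ ℂ^n and e ∈ ℂ^m, setting f := C_I x + D_I e, u := (f + e)/√2 and y := (e − f)/√2, the equation E x⁺ = A_I x + B_I e implies E x⁺ = A_S x + B_S u together with y = C_S x + D_S u; (b) if moreover X ∈ ℂ^{n×n} is Hermitian positive semidefinite and satisfies, for all x ∈ ℂ^n and e ∈ ℂ^m with f := C_I x + D_I e, the impedance dissipation inequality (A_I x + B_I e)^H X (A_I x + B_I e) − (E x)^H X (E x) ≤ 2 Re(e^H f), then for all x ∈ ℂ^n and u ∈ ℂ^m with y := C_S x + D_S u it satisfies the scattering dissipation inequality (A_S x + B_S u)^H X (A_S x + B_S u) − (E x)^H X (E x) ≤ ‖u‖² − ‖y‖². -/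
open Matrix
open scoped ComplexOrder

/-- External Cayley transform of an impedance passive descriptor system:
(a) solutions of the impedance system are solutions of the transformed scattering
system; (b) any quadratic storage matrix `X` for the impedance dissipation
inequality also certifies the scattering dissipation inequality of the transform. -/
theorem external_cayley_impedance_to_scattering
    (n m : ℕ)
    (E AI : Matrix (Fin n) (Fin n) ℂ)
    (BI : Matrix (Fin n) (Fin m) ℂ)
    (CI : Matrix (Fin m) (Fin n) ℂ)
    (DI : Matrix (Fin m) (Fin m) ℂ)
    (hD : IsUnit ((1 : Matrix (Fin m) (Fin m) ℂ) + DI))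
    (AS : Matrix (Fin n) (Fin n) ℂ)
    (hAS : AS = AI - BI * ((1 : Matrix (Fin m) (Fin m) ℂ) + DI)⁻¹ * CI)
    (BS : Matrix (Fin n) (Fin m) ℂ)
    (hBS : BS = (Real.sqrt 2 : ℂ) • (BI * ((1 : Matrix (Fin m) (Fin m) ℂ) + DI)⁻¹))
    (CS : Matrix (Fin m) (Fin n) ℂ)
    (hCS : CS = -((Real.sqrt 2 : ℂ) • (((1 : Matrix (Fin m) (Fin m) ℂ) + DI)⁻¹ * CI)))
    (DS : Matrix (Fin m) (Fin m) ℂ)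
    (hDS : DS = -(((1 : Matrix (Fin m) (Fin m) ℂ) + DI)⁻¹ * (DI - 1))) :
    (∀ (x xp : Fin n → ℂ) (e : Fin m → ℂ) (f u y : Fin m → ℂ),
      f = CI *ᵥ x + DI *ᵥ e →
      u = ((Real.sqrt 2 : ℂ))⁻¹ • (f + e) →
      y = ((Real.sqrt 2 : ℂ))⁻¹ • (e - f) →
      E *ᵥ xp = AI *ᵥ x + BI *ᵥ e →
      (E *ᵥ xp = AS *ᵥ x + BS *ᵥ u ∧ y = CS *ᵥ x + DS *ᵥ u))
    ∧
    (∀ X : Matrix (Fin n) (Fin n) ℂ, X.PosSemidef →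
      (∀ (x : Fin n → ℂ) (e : Fin m → ℂ),
        (star (AI *ᵥ x + BI *ᵥ e) ⬝ᵥ (X *ᵥ (AI *ᵥ x + BI *ᵥ e))).re
          - (star (E *ᵥ x) ⬝ᵥ (X *ᵥ (E *ᵥ x))).re
          ≤ 2 * (star e ⬝ᵥ (CI *ᵥ x + DI *ᵥ e)).re) →
      (∀ (x : Fin n → ℂ) (u : Fin m → ℂ),
        (star (AS *ᵥ x + BS *ᵥ u) ⬝ᵥ (X *ᵥ (AS *ᵥ x + BS *ᵥ u))).re
          - (star (E *ᵥ x) ⬝ᵥ (X *ᵥ (E *ᵥ x))).re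
          ≤ (star u ⬝ᵥ u).re
            - (star (CS *ᵥ x + DS *ᵥ u) ⬝ᵥ (CS *ᵥ x + DS *ᵥ u)).re)) := by
  have hdet : IsUnit ((1 : Matrix (Fin m) (Fin m) ℂ) + DI).det :=
    (Matrix.isUnit_iff_isUnit_det _).mp hD
  have hg1 : ((1 : Matrix (Fin m) (Fin m) ℂ) + DI)⁻¹ * ((1 : Matrix (Fin m) (Fin m) ℂ) + DI) = 1 :=
    Matrix.nonsing_inv_mul _ hdet
  have hg2 : ((1 : Matrix (Fin m) (Fin m) ℂ) + DI) * ((1 : Matrix (Fin m) (Fin m) ℂ) + DI)⁻¹ = 1 :=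
    Matrix.mul_nonsing_inv _ hdet
  have hs0 : (Real.sqrt 2 : ℂ) ≠ 0 :=
    Complex.ofReal_ne_zero.mpr (Real.sqrt_pos.mpr (by norm_num : (0:ℝ) < 2)).ne'
  have hs2 : (Real.sqrt 2 : ℂ) * (Real.sqrt 2 : ℂ) = 2 := by
    rw [← Complex.ofReal_mul, Real.mul_self_sqrt (by norm_num)]
    norm_num
  -- key algebraic identity A
  have keyA : ∀ (x : Fin n → ℂ) (e : Fin m → ℂ),
      AS *ᵥ x + BS *ᵥ (((Real.sqrt 2 : ℂ))⁻¹ • ((CI *ᵥ x + DI *ᵥ e) + e)) = AI *ᵥ x + BI *ᵥ e := by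
    intro x e
    have hw : (CI *ᵥ x + DI *ᵥ e) + e = CI *ᵥ x + ((1 : Matrix (Fin m) (Fin m) ℂ) + DI) *ᵥ e := by
      rw [add_mulVec, one_mulVec]; abel
    rw [hAS, hBS, hw]
    simp only [Matrix.smul_mul, smul_mulVec, mulVec_smul, mulVec_add, mulVec_mulVec,
      sub_mulVec, smul_add, smul_smul, inv_mul_cancel₀ hs0, mul_inv_cancel₀ hs0, one_smul]
    rw [show BI * ((1 : Matrix (Fin m) (Fin m) ℂ) + DI)⁻¹ * ((1 : Matrix (Fin m) (Fin m) ℂ) + DI)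
        = BI by rw [Matrix.mul_assoc, hg1, Matrix.mul_one]]
    abel
  -- key algebraic identity C
  have keyC : ∀ (x : Fin n → ℂ) (e : Fin m → ℂ),
      CS *ᵥ x + DS *ᵥ (((Real.sqrt 2 : ℂ))⁻¹ • ((CI *ᵥ x + DI *ᵥ e) + e))
        = ((Real.sqrt 2 : ℂ))⁻¹ • (e - (CI *ᵥ x + DI *ᵥ e)) := by
    intro x e
    have hw : (CI *ᵥ x + DI *ᵥ e) + e = CI *ᵥ x + ((1 : Matrix (Fin m) (Fin m) ℂ) + DI) *ᵥ e := by
      rw [add_mulVec, one_mulVec]; abel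
    have hc1 : ((1 : Matrix (Fin m) (Fin m) ℂ) + DI)⁻¹ * (DI - 1) * ((1 : Matrix (Fin m) (Fin m) ℂ) + DI)
        = DI - 1 := by
      have hcomm : (DI - 1) * ((1 : Matrix (Fin m) (Fin m) ℂ) + DI)
          = ((1 : Matrix (Fin m) (Fin m) ℂ) + DI) * (DI - 1) := by noncomm_ring
      rw [Matrix.mul_assoc, hcomm, ← Matrix.mul_assoc, hg1, Matrix.one_mul]
    have hM : (2 : ℂ) • (((1 : Matrix (Fin m) (Fin m) ℂ) + DI)⁻¹ * CI)
        + ((1 : Matrix (Fin m) (Fin m) ℂ) + DI)⁻¹ * (DI - 1) * CI = CI := by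
      calc (2 : ℂ) • (((1 : Matrix (Fin m) (Fin m) ℂ) + DI)⁻¹ * CI)
            + ((1 : Matrix (Fin m) (Fin m) ℂ) + DI)⁻¹ * (DI - 1) * CI
          = ((1 : Matrix (Fin m) (Fin m) ℂ) + DI)⁻¹ * ((2 : ℂ) • CI + (DI - 1) * CI) := by
            rw [Matrix.mul_add, Matrix.mul_smul, Matrix.mul_assoc]
        _ = ((1 : Matrix (Fin m) (Fin m) ℂ) + DI)⁻¹
              * (((1 : Matrix (Fin m) (Fin m) ℂ) + DI) * CI) := by
            congr 1
            rw [Matrix.sub_mul, Matrix.add_mul, Matrix.one_mul, two_smul]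
            abel
        _ = CI := by rw [← Matrix.mul_assoc, hg1, Matrix.one_mul]
    have hc2 : (2 : ℂ) • ((((1 : Matrix (Fin m) (Fin m) ℂ) + DI)⁻¹ * CI) *ᵥ x)
        + (((1 : Matrix (Fin m) (Fin m) ℂ) + DI)⁻¹ * (DI - 1) * CI) *ᵥ x = CI *ᵥ x := by
      rw [← smul_mulVec, ← add_mulVec, hM]
    rw [hCS, hDS, hw]
    apply smul_right_injective (Fin m → ℂ) hs0
    simp only [neg_mulVec, Matrix.neg_mul, smul_mulVec, mulVec_smul, mulVec_add,
      mulVec_mulVec, smul_neg, smul_add, smul_smul, mul_inv_cancel₀ hs0, one_smul, hs2, hc1]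
    calc -((2 : ℂ) • ((((1 : Matrix (Fin m) (Fin m) ℂ) + DI)⁻¹ * CI) *ᵥ x))
          + (-((((1 : Matrix (Fin m) (Fin m) ℂ) + DI)⁻¹ * (DI - 1) * CI) *ᵥ x)
            + -((DI - 1) *ᵥ e))
        = -((2 : ℂ) • ((((1 : Matrix (Fin m) (Fin m) ℂ) + DI)⁻¹ * CI) *ᵥ x)
            + (((1 : Matrix (Fin m) (Fin m) ℂ) + DI)⁻¹ * (DI - 1) * CI) *ᵥ x)
            + -((DI - 1) *ᵥ e) := by abel
      _ = -(CI *ᵥ x) + -((DI - 1) *ᵥ e) := by rw [hc2]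
      _ = e - (CI *ᵥ x + DI *ᵥ e) := by rw [sub_mulVec, one_mulVec]; abel
  -- energy identity
  have energy : ∀ (e f : Fin m → ℂ),
      (star (((Real.sqrt 2 : ℂ))⁻¹ • (f + e)) ⬝ᵥ (((Real.sqrt 2 : ℂ))⁻¹ • (f + e))).re
        - (star (((Real.sqrt 2 : ℂ))⁻¹ • (e - f)) ⬝ᵥ (((Real.sqrt 2 : ℂ))⁻¹ • (e - f))).re
        = 2 * (star e ⬝ᵥ f).re := by
    intro e f
    have hstar : star (((Real.sqrt 2 : ℂ))⁻¹) = ((Real.sqrt 2 : ℂ))⁻¹ := by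
      rw [star_inv₀, Complex.star_def, Complex.conj_ofReal]
    have hz : star (((Real.sqrt 2 : ℂ))⁻¹ • (f + e)) ⬝ᵥ (((Real.sqrt 2 : ℂ))⁻¹ • (f + e))
        - star (((Real.sqrt 2 : ℂ))⁻¹ • (e - f)) ⬝ᵥ (((Real.sqrt 2 : ℂ))⁻¹ • (e - f))
        = star e ⬝ᵥ f + star f ⬝ᵥ e := by
      simp only [star_smul, hstar, smul_dotProduct, dotProduct_smul, smul_smul,
        star_add, star_sub, add_dotProduct, dotProduct_add, sub_dotProduct, dotProduct_sub,
        smul_eq_mul]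
      field_simp
      linear_combination (-(star e ⬝ᵥ f + star f ⬝ᵥ e)) * hs2
    have hre : (star f ⬝ᵥ e).re = (star e ⬝ᵥ f).re := by
      rw [star_dotProduct]; simp [Complex.star_def]
    rw [← Complex.sub_re, hz, Complex.add_re, hre]
    ring
  -- surjectivity of the input transform
  have keyB : ∀ (x : Fin n → ℂ) (u : Fin m → ℂ),
      ((Real.sqrt 2 : ℂ))⁻¹ •
        ((CI *ᵥ x + DI *ᵥ (((1 : Matrix (Fin m) (Fin m) ℂ) + DI)⁻¹ *ᵥ ((Real.sqrt 2 : ℂ) • u - CI *ᵥ x)))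
          + ((1 : Matrix (Fin m) (Fin m) ℂ) + DI)⁻¹ *ᵥ ((Real.sqrt 2 : ℂ) • u - CI *ᵥ x)) = u := by
    intro x u
    have h1 : DI *ᵥ (((1 : Matrix (Fin m) (Fin m) ℂ) + DI)⁻¹ *ᵥ ((Real.sqrt 2 : ℂ) • u - CI *ᵥ x))
        + ((1 : Matrix (Fin m) (Fin m) ℂ) + DI)⁻¹ *ᵥ ((Real.sqrt 2 : ℂ) • u - CI *ᵥ x)
        = (Real.sqrt 2 : ℂ) • u - CI *ᵥ x := by
      have h2 : DI *ᵥ (((1 : Matrix (Fin m) (Fin m) ℂ) + DI)⁻¹ *ᵥ ((Real.sqrt 2 : ℂ) • u - CI *ᵥ x))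
          + ((1 : Matrix (Fin m) (Fin m) ℂ) + DI)⁻¹ *ᵥ ((Real.sqrt 2 : ℂ) • u - CI *ᵥ x)
          = (((1 : Matrix (Fin m) (Fin m) ℂ) + DI) * ((1 : Matrix (Fin m) (Fin m) ℂ) + DI)⁻¹)
              *ᵥ ((Real.sqrt 2 : ℂ) • u - CI *ᵥ x) := by
        rw [← mulVec_mulVec, add_mulVec, one_mulVec]
        abel
      rw [h2, hg2, one_mulVec]
    rw [add_assoc, h1]
    rw [show CI *ᵥ x + ((Real.sqrt 2 : ℂ) • u - CI *ᵥ x) = (Real.sqrt 2 : ℂ) • u by abel]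
    rw [smul_smul, inv_mul_cancel₀ hs0, one_smul]
  constructor
  · intro x xp e f u y hf hu hy hE
    constructor
    · rw [hE, hu, hf]; exact (keyA x e).symm
    · rw [hy, hu, hf]; exact (keyC x e).symm
  · intro X _ himp x u
    set e : Fin m → ℂ :=
      ((1 : Matrix (Fin m) (Fin m) ℂ) + DI)⁻¹ *ᵥ ((Real.sqrt 2 : ℂ) • u - CI *ᵥ x) with he
    have hu : ((Real.sqrt 2 : ℂ))⁻¹ • ((CI *ᵥ x + DI *ᵥ e) + e) = u := keyB x u
    have h1 : AS *ᵥ x + BS *ᵥ u = AI *ᵥ x + BI *ᵥ e := by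
      rw [← hu]; exact keyA x e
    have h2 : CS *ᵥ x + DS *ᵥ u = ((Real.sqrt 2 : ℂ))⁻¹ • (e - (CI *ᵥ x + DI *ᵥ e)) := by
      rw [← hu]; exact keyC x e
    have hen := energy e (CI *ᵥ x + DI *ᵥ e)
    have himpe := himp x e
    rw [h1, h2, ← hu]
    linarith [himpe, hen]
end

section
/- Let E, A_S ∈ ℂ^{n×n}, B_S ∈ ℂ^{n×m}, C_S ∈ ℂ^{m×n}, D_S ∈ ℂ^{m×m} with I_m + D_S invertible, and define A_I = A_S − B_S (I_m + D_S)^{-1} C_S, B_I = √2 · B_S (I_m + D_S)^{-1}, C_I = −√2 · (I_m + D_S)^{-1} C_S, D_I = −(I_m + D_S)^{-1}(D_S − I_m). If X ∈ ℂ^{n×n} is Hermitian positive semidefinite and satisfies, for all x ∈ ℂ^n and u ∈ ℂ^m with y := C_S x + D_S u, the scattering dissipation inequality (A_S x + B_S u)^H X (A_S x + B_S u) − (E x)^H X (E x) ≤ ‖u‖² − ‖y‖², then for all x ∈ ℂ^n and e ∈ ℂ^m with f := C_I x + D_I e, X satisfies the impedance dissipation inequality (A_I x + B_I e)^H X (A_I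 x + B_I e) − (E x)^H X (E x) ≤ 2 Re(e^H f). In other words, the external Cayley transform of a scattering passive system with quadratic storage X is impedance passive with the same storage function. -/
open Matrix
open scoped ComplexOrder

/-- External Cayley transform of a scattering passive descriptor system with
quadratic storage matrix `X` is impedance passive with the same storage matrix. -/
theorem external_cayley_scattering_to_impedance
    (n m : ℕ)
    (E AS : Matrix (Fin n) (Fin n) ℂ)
    (BS : Matrix (Fin n) (Fin m) ℂ)
    (CS : Matrix (Fin m) (Fin n) ℂ)
    (DS : Matrix (Fin m) (Fin m) ℂ)
    (hD : IsUnit ((1 : Matrix (Fin m) (Fin m) ℂ) + DS))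
    (AI : Matrix (Fin n) (Fin n) ℂ)
    (hAI : AI = AS - BS * ((1 : Matrix (Fin m) (Fin m) ℂ) + DS)⁻¹ * CS)
    (BI : Matrix (Fin n) (Fin m) ℂ)
    (hBI : BI = (Real.sqrt 2 : ℂ) • (BS * ((1 : Matrix (Fin m) (Fin m) ℂ) + DS)⁻¹))
    (CI : Matrix (Fin m) (Fin n) ℂ)
    (hCI : CI = -((Real.sqrt 2 : ℂ) • (((1 : Matrix (Fin m) (Fin m) ℂ) + DS)⁻¹ * CS)))
    (DI : Matrix (Fin m) (Fin m) ℂ)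
    (hDI : DI = -(((1 : Matrix (Fin m) (Fin m) ℂ) + DS)⁻¹ * (DS - 1)))
    (X : Matrix (Fin n) (Fin n) ℂ) (hX : X.PosSemidef)
    (hdiss : ∀ (x : Fin n → ℂ) (u : Fin m → ℂ),
      (star (AS *ᵥ x + BS *ᵥ u) ⬝ᵥ (X *ᵥ (AS *ᵥ x + BS *ᵥ u))).re
        - (star (E *ᵥ x) ⬝ᵥ (X *ᵥ (E *ᵥ x))).re
        ≤ (star u ⬝ᵥ u).re
          - (star (CS *ᵥ x + DS *ᵥ u) ⬝ᵥ (CS *ᵥ x + DS *ᵥ u)).re) :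
    ∀ (x : Fin n → ℂ) (e : Fin m → ℂ),
      (star (AI *ᵥ x + BI *ᵥ e) ⬝ᵥ (X *ᵥ (AI *ᵥ x + BI *ᵥ e))).re
        - (star (E *ᵥ x) ⬝ᵥ (X *ᵥ (E *ᵥ x))).re
        ≤ 2 * (star e ⬝ᵥ (CI *ᵥ x + DI *ᵥ e)).re := by
  intro x e
  set T : Matrix (Fin m) (Fin m) ℂ := (1 : Matrix (Fin m) (Fin m) ℂ) + DS with hT
  have hdet : IsUnit T.det := (Matrix.isUnit_iff_isUnit_det _).mp hD
  have hTl : T * T⁻¹ = 1 := Matrix.mul_nonsing_inv _ hdet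
  have hTr : T⁻¹ * T = 1 := Matrix.nonsing_inv_mul _ hdet
  set s : ℂ := (Real.sqrt 2 : ℂ) with hs
  have hs2 : s * s = 2 := by
    rw [hs, ← Complex.ofReal_mul, Real.mul_self_sqrt (by norm_num)]
    norm_num
  -- the scattering input corresponding to (x, e)
  set u : Fin m → ℂ := T⁻¹ *ᵥ (s • e - CS *ᵥ x) with hu
  set y : Fin m → ℂ := CS *ᵥ x + DS *ᵥ u with hy
  set f : Fin m → ℂ := CI *ᵥ x + DI *ᵥ e with hf
  -- √2 • e = y + u
  have hTu : T *ᵥ u = s • e - CS *ᵥ x := by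
    rw [hu, Matrix.mulVec_mulVec, hTl, Matrix.one_mulVec]
  have h1 : s • e = y + u := by
    have : (1 : Matrix (Fin m) (Fin m) ℂ) *ᵥ u + DS *ᵥ u = s • e - CS *ᵥ x := by
      rw [← Matrix.add_mulVec]; exact hTu
    rw [Matrix.one_mulVec] at this
    rw [hy, ← eq_sub_iff_add_eq.mp this]
    abel
  have hsum : u + DS *ᵥ u = s • e - CS *ᵥ x := by
    have h := hTu
    rwa [hT, Matrix.add_mulVec, Matrix.one_mulVec] at h
  have hDSsum : DS *ᵥ u + DS *ᵥ (DS *ᵥ u) = s • (DS *ᵥ e) - DS *ᵥ (CS *ᵥ x) := by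
    have h := congrArg (fun v => DS *ᵥ v) hsum
    simpa [Matrix.mulVec_add, Matrix.mulVec_sub, Matrix.mulVec_smul] using h
  -- √2 • f = u - y
  have h2 : s • f = u - y := by
    have hinj : ∀ a b : Fin m → ℂ, T *ᵥ a = T *ᵥ b → a = b := by
      intro a b hab
      have h := congrArg (fun v => T⁻¹ *ᵥ v) hab
      simpa [Matrix.mulVec_mulVec, hTr, Matrix.one_mulVec] using h
    apply hinj
    have hTCI : T *ᵥ (CI *ᵥ x) = -(s • (CS *ᵥ x)) := by
      rw [Matrix.mulVec_mulVec, hCI, Matrix.mul_neg, Matrix.mul_smul,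
        ← Matrix.mul_assoc, hTl, Matrix.one_mul, Matrix.neg_mulVec, Matrix.smul_mulVec]
    have hTDI : T *ᵥ (DI *ᵥ e) = e - DS *ᵥ e := by
      rw [Matrix.mulVec_mulVec, hDI, Matrix.mul_neg, ← Matrix.mul_assoc, hTl, Matrix.one_mul,
        Matrix.neg_mulVec, Matrix.sub_mulVec, Matrix.one_mulVec, neg_sub]
    have e1 : T *ᵥ (s • f) = s • (-(s • (CS *ᵥ x)) + (e - DS *ᵥ e)) := by
      rw [Matrix.mulVec_smul, hf, Matrix.mulVec_add, hTCI, hTDI]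
    have e2 : T *ᵥ (u - y) = (u - y) + DS *ᵥ (u - y) := by
      rw [hT, Matrix.add_mulVec, Matrix.one_mulVec]
    rw [e1, e2, hy]
    funext i
    have a1 := congrFun hsum i
    have a2 := congrFun hDSsum i
    simp only [Matrix.mulVec_sub, Matrix.mulVec_add, Pi.sub_apply, Pi.add_apply, Pi.neg_apply,
      Pi.smul_apply, smul_eq_mul] at a1 a2 ⊢
    linear_combination (-((CS *ᵥ x) i)) * hs2 - a1 + a2
  -- state map matches
  have h3 : AI *ᵥ x + BI *ᵥ e = AS *ᵥ x + BS *ᵥ u := by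
    rw [hAI, hBI, hu]
    simp only [Matrix.mulVec_mulVec, Matrix.sub_mulVec, Matrix.smul_mulVec,
      Matrix.mulVec_sub, Matrix.mulVec_smul, Matrix.mul_assoc]
    abel
  have hss : star s = s := by simp [hs]
  have h5 : (2:ℂ) * (star e ⬝ᵥ f) = star (y + u) ⬝ᵥ (u - y) := by
    rw [← h1, ← h2, star_smul, hss, smul_dotProduct, dotProduct_smul, smul_eq_mul,
      smul_eq_mul, ← mul_assoc, hs2]
  have hswap : (star u ⬝ᵥ y).re = (star y ⬝ᵥ u).re := by
    rw [star_dotProduct]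
    simp [Complex.star_def]
  have h4 : 2 * (star e ⬝ᵥ f).re = (star u ⬝ᵥ u).re - (star y ⬝ᵥ y).re := by
    have h6 := congrArg Complex.re h5
    rw [star_add, add_dotProduct, dotProduct_sub, dotProduct_sub] at h6
    simp only [Complex.add_re, Complex.sub_re] at h6
    have h7 : ((2:ℂ) * (star e ⬝ᵥ f)).re = 2 * (star e ⬝ᵥ f).re := by
      simp [Complex.mul_re]
    rw [h7] at h6
    linarith
  rw [h3, h4]
  have h8 := hdiss x u
  rw [← hy] at h8
  exact h8
end

section
/- Let E, A ∈ ℂ^{n×n}, B ∈ ℂ^{n×m}, C ∈ ℂ^{m×n}, D ∈ ℂ^{m×m}, and suppose X ∈ ℂ^{n×n} is a Hermitian positive definite solution of the discrete-time scattering KYP inequality (d-sKYP). Then ker(I_m + D) ⊆ ker B ∩ ker C^H; that is, every v ∈ ℂ^m with D v = −v satisfies B v = 0 and C^H v = 0. -/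
/-!
Test the KYP form with `(0, v)`. Since `D v = -v`, its value is
`‖v‖² - ‖D v‖² - (B v)ᴴ X (B v) = -(B v)ᴴ X (B v) ≤ 0`, so positive semidefiniteness forces
`(B v)ᴴ X (B v) = 0`, whence `B v = 0` as `X` is positive definite. A vanishing value of a positive
semidefinite form means `(0, v)` lies in the kernel, and the first block row of that kernel equation
reads `-Aᴴ X B v + Cᴴ v = 0`.
-/

open Matrix
open scoped ComplexOrder

namespace Matrix

variable {ι κ α : Type*} [Fintype ι] [Fintype κ]

lemma star_dotProduct_conjTranspose_mul_mulVec [CommSemiring α] [StarRing α]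
    (A : Matrix κ ι α) (M : Matrix κ κ α) (v : ι → α) (w : κ → α) :
    star v ⬝ᵥ (Aᴴ * M) *ᵥ w = star (A *ᵥ v) ⬝ᵥ M *ᵥ w := by
  rw [← mulVec_mulVec, dotProduct_mulVec, vecMul_conjTranspose, star_star]

lemma star_dotProduct_fromBlocks_mulVec_inr [NonUnitalNonAssocSemiring α] [StarAddMonoid α]
    (P : Matrix ι ι α) (Q : Matrix ι κ α) (R : Matrix κ ι α) (S : Matrix κ κ α) (v : κ → α) :
    star (Sum.elim 0 v) ⬝ᵥ fromBlocks P Q R S *ᵥ Sum.elim 0 v = star v ⬝ᵥ S *ᵥ v := by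
  rw [fromBlocks_mulVec, Function.star_sumElim, star_zero, sumElim_dotProduct_sumElim]
  simp

lemma PosSemidef.fromBlocks₁₂_mulVec_eq_zero {𝕜 : Type*} [RCLike 𝕜]
    {P : Matrix ι ι 𝕜} {Q : Matrix ι κ 𝕜} {R : Matrix κ ι 𝕜} {S : Matrix κ κ 𝕜}
    (hM : (fromBlocks P Q R S).PosSemidef) {v : κ → 𝕜} (hv : star v ⬝ᵥ S *ᵥ v = 0) :
    Q *ᵥ v = 0 := by
  rw [← star_dotProduct_fromBlocks_mulVec_inr P Q R S, hM.dotProduct_mulVec_zero_iff,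
    fromBlocks_mulVec] at hv
  ext i
  simpa using congrFun hv (Sum.inl i)

lemma star_dotProduct_one_sub_sub_mulVec_of_mulVec_eq_neg [CommRing α] [StarRing α]
    [DecidableEq κ] (B : Matrix ι κ α) (D : Matrix κ κ α) (X : Matrix ι ι α) {v : κ → α}
    (hv : D *ᵥ v = -v) :
    star v ⬝ᵥ (1 - Dᴴ * D - Bᴴ * X * B) *ᵥ v = -(star (B *ᵥ v) ⬝ᵥ X *ᵥ (B *ᵥ v)) := by
  rw [sub_mulVec, sub_mulVec, dotProduct_sub, dotProduct_sub, one_mulVec,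
    ← mulVec_mulVec v (Bᴴ * X) B, star_dotProduct_conjTranspose_mul_mulVec,
    star_dotProduct_conjTranspose_mul_mulVec, hv,
    star_neg, neg_dotProduct, dotProduct_neg, neg_neg, sub_self, zero_sub]

end Matrix

/-- For a positive definite solution `X` of the discrete-time scattering KYP
inequality (d-sKYP), `ker(I + D) ⊆ ker B ∩ ker Cᴴ`. -/
theorem dsKYP_ker_inclusion
    (n m : ℕ)
    (E A : Matrix (Fin n) (Fin n) ℂ)
    (B : Matrix (Fin n) (Fin m) ℂ)
    (C : Matrix (Fin m) (Fin n) ℂ)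
    (D : Matrix (Fin m) (Fin m) ℂ)
    (X : Matrix (Fin n) (Fin n) ℂ)
    (hX : X.PosDef)
    (hKYP : (Matrix.fromBlocks
        (-(Aᴴ * X * A) + Eᴴ * X * E - Cᴴ * C) (-(Aᴴ * X * B) - Cᴴ * D)
        (-(Dᴴ * C) - Bᴴ * X * A) (1 - Dᴴ * D - Bᴴ * X * B)).PosSemidef) :
    ∀ v : Fin m → ℂ, D *ᵥ v = -v → B *ᵥ v = 0 ∧ Cᴴ *ᵥ v = 0 := by
  intro v hv
  have hform := star_dotProduct_one_sub_sub_mulVec_of_mulVec_eq_neg B D X hv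
  have hBv : B *ᵥ v = 0 := by
    by_contra hBv
    have hnonneg := hKYP.dotProduct_mulVec_nonneg (Sum.elim 0 v)
    rw [star_dotProduct_fromBlocks_mulVec_inr, hform, neg_nonneg] at hnonneg
    exact (hX.dotProduct_mulVec_pos hBv).not_ge hnonneg
  have hQv := hKYP.fromBlocks₁₂_mulVec_eq_zero (by rw [hform, hBv]; simp)
  refine ⟨hBv, ?_⟩
  simpa [sub_mulVec, neg_mulVec, ← mulVec_mulVec, hBv, hv, mulVec_neg] using hQv
end

section
/- Let A ∈ ℂ^{n×n}, B ∈ ℂ^{n×m}, C ∈ ℂ^{m×n}, D ∈ ℂ^{m×m}, let α ∈ ℂ with Re α > 0 and α I_n − A invertible, and define the internal Cayley transform 𝐀 = (α I_n − A)^{-1}(ᾱ I_n + A), 𝐁 = √(2 Re α) · (α I_n − A)^{-1} B, 𝐂 = √(2 Re α) · C (α I_n − A)^{-1}, 𝐃 = C (α I_n − A)^{-1} B + D. If X ∈ ℂ^{n×n} is Hermitian positive semidefinite and the continuous-time impedance KYP inequality holds, i.e., the block matrix [[−A^H X − X A, C^H − X B], [C − B^H X, D + D^H]] is positive semidefinite,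 then X solves the discrete-time impedance KYP inequality for the transformed system, i.e., the block matrix [[−𝐀^H X 𝐀 + X, 𝐂^H − 𝐀^H X 𝐁], [𝐂 − 𝐁^H X 𝐀, 𝐃 + 𝐃^H − 𝐁^H X 𝐁]] is positive semidefinite. -/
open Matrix
open scoped ComplexOrder

/-- The internal Cayley (Tustin) transform maps a solution of the continuous-time
impedance KYP inequality to a solution of the discrete-time impedance KYP
inequality for the transformed system. -/
theorem internal_cayley_preserves_iKYP
    (n m : ℕ)
    (A : Matrix (Fin n) (Fin n) ℂ)
    (B : Matrix (Fin n) (Fin m) ℂ)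
    (C : Matrix (Fin m) (Fin n) ℂ)
    (D : Matrix (Fin m) (Fin m) ℂ)
    (α : ℂ) (hα : 0 < α.re)
    (hinv : IsUnit (α • (1 : Matrix (Fin n) (Fin n) ℂ) - A))
    (Ad : Matrix (Fin n) (Fin n) ℂ)
    (hAd : Ad = (α • (1 : Matrix (Fin n) (Fin n) ℂ) - A)⁻¹
        * ((starRingEnd ℂ) α • (1 : Matrix (Fin n) (Fin n) ℂ) + A))
    (Bd : Matrix (Fin n) (Fin m) ℂ)
    (hBd : Bd = (Real.sqrt (2 * α.re) : ℂ)
        • ((α • (1 : Matrix (Fin n) (Fin n) ℂ) - A)⁻¹ * B))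
    (Cd : Matrix (Fin m) (Fin n) ℂ)
    (hCd : Cd = (Real.sqrt (2 * α.re) : ℂ)
        • (C * (α • (1 : Matrix (Fin n) (Fin n) ℂ) - A)⁻¹))
    (Dd : Matrix (Fin m) (Fin m) ℂ)
    (hDd : Dd = C * (α • (1 : Matrix (Fin n) (Fin n) ℂ) - A)⁻¹ * B + D)
    (X : Matrix (Fin n) (Fin n) ℂ) (hX : X.PosSemidef)
    (hKYP : (Matrix.fromBlocks
        (-(Aᴴ * X) - X * A) (Cᴴ - X * B)
        (C - Bᴴ * X) (D + Dᴴ)).PosSemidef) :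
    (Matrix.fromBlocks
        (-(Adᴴ * X * Ad) + X) (Cdᴴ - Adᴴ * X * Bd)
        (Cd - Bdᴴ * X * Ad) (Dd + Ddᴴ - Bdᴴ * X * Bd)).PosSemidef := by
  set S : Matrix (Fin n) (Fin n) ℂ := α • (1 : Matrix (Fin n) (Fin n) ℂ) - A with hSdef
  set r : ℂ := (Real.sqrt (2 * α.re) : ℂ) with hrdef
  have hdet : IsUnit S.det := (Matrix.isUnit_iff_isUnit_det S).mp hinv
  have hdetH : IsUnit Sᴴ.det := by
    rw [Matrix.det_conjTranspose]; exact hdet.star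
  set P : Matrix (Fin n) (Fin n) ℂ := S⁻¹ with hPdef
  set Q : Matrix (Fin n) (Fin n) ℂ := Sᴴ⁻¹ with hQdef
  have hPH : Pᴴ = Q := by rw [hPdef, hQdef, Matrix.conjTranspose_nonsing_inv]
  have hQH : Qᴴ = P := by rw [← hPH, conjTranspose_conjTranspose]
  have hPS : P * S = 1 := Matrix.nonsing_inv_mul S hdet
  have hSP : S * P = 1 := Matrix.mul_nonsing_inv S hdet
  have hQS : Q * Sᴴ = 1 := Matrix.nonsing_inv_mul Sᴴ hdetH
  have hSQ : Sᴴ * Q = 1 := Matrix.mul_nonsing_inv Sᴴ hdetH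
  have hPSx : ∀ (l : Type) (x : Matrix (Fin n) l ℂ), P * (S * x) = x := fun l x => by
    rw [← Matrix.mul_assoc, hPS, Matrix.one_mul]
  have hSPx : ∀ (l : Type) (x : Matrix (Fin n) l ℂ), S * (P * x) = x := fun l x => by
    rw [← Matrix.mul_assoc, hSP, Matrix.one_mul]
  have hQSx : ∀ (l : Type) (x : Matrix (Fin n) l ℂ), Q * (Sᴴ * x) = x := fun l x => by
    rw [← Matrix.mul_assoc, hQS, Matrix.one_mul]
  have hSQx : ∀ (l : Type) (x : Matrix (Fin n) l ℂ), Sᴴ * (Q * x) = x := fun l x => by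
    rw [← Matrix.mul_assoc, hSQ, Matrix.one_mul]
  -- scalar facts
  have hrre : r = ((Real.sqrt (2 * α.re) : ℝ) : ℂ) := rfl
  have hrconj : (starRingEnd ℂ) r = r := by rw [hrre, Complex.conj_ofReal]
  have hrr : r * r = α + (starRingEnd ℂ) α := by
    rw [hrre, ← Complex.ofReal_mul, Real.mul_self_sqrt (by positivity)]
    rw [Complex.add_conj]
  have hconj : (starRingEnd ℂ) α = r * r - α := by rw [hrr]; ring
  -- clean forms
  have hA' : A = α • (1 : Matrix (Fin n) (Fin n) ℂ) - S := by rw [hSdef]; abel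
  have hAH : Aᴴ = (r * r - α) • (1 : Matrix (Fin n) (Fin n) ℂ) - Sᴴ := by
    rw [hA', conjTranspose_sub, conjTranspose_smul, conjTranspose_one,
      ← starRingEnd_apply, hconj]
  have hAd2 : Ad = (r * r) • P - 1 := by
    rw [hAd, hconj, hA']
    simp only [Matrix.mul_add, Matrix.mul_sub, Matrix.mul_smul, Matrix.mul_one, hPS]
    module
  have hAdH : Adᴴ = (r * r) • Q - 1 := by
    rw [hAd2, conjTranspose_sub, conjTranspose_smul, conjTranspose_one, hPH,
      ← starRingEnd_apply, _root_.map_mul, hrconj]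
  have hBdH : Bdᴴ = r • (Bᴴ * Q) := by
    rw [hBd, conjTranspose_smul, conjTranspose_mul, hPH, ← starRingEnd_apply, hrconj]
  have hCdH : Cdᴴ = r • (Q * Cᴴ) := by
    rw [hCd, conjTranspose_smul, conjTranspose_mul, hPH, ← starRingEnd_apply, hrconj]
  have hDdH : Ddᴴ = Bᴴ * (Q * Cᴴ) + Dᴴ := by
    rw [hDd, conjTranspose_add, conjTranspose_mul, conjTranspose_mul, hPH]
  set M : Matrix (Fin n ⊕ Fin m) (Fin n ⊕ Fin m) ℂ :=
    Matrix.fromBlocks (r • P) (P * B) (0 : Matrix (Fin m) (Fin n) ℂ)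
      (1 : Matrix (Fin m) (Fin m) ℂ) with hMdef
  have hMH : Mᴴ = Matrix.fromBlocks (r • Q) (0 : Matrix (Fin n) (Fin m) ℂ)
      (Bᴴ * Q) (1 : Matrix (Fin m) (Fin m) ℂ) := by
    rw [hMdef, Matrix.fromBlocks_conjTranspose, conjTranspose_smul, hPH,
      conjTranspose_mul, hPH, ← starRingEnd_apply, hrconj, conjTranspose_zero,
      conjTranspose_one]
  have key : (Matrix.fromBlocks
        (-(Adᴴ * X * Ad) + X) (Cdᴴ - Adᴴ * X * Bd)
        (Cd - Bdᴴ * X * Ad) (Dd + Ddᴴ - Bdᴴ * X * Bd))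
      = Mᴴ * (Matrix.fromBlocks
        (-(Aᴴ * X) - X * A) (Cᴴ - X * B)
        (C - Bᴴ * X) (D + Dᴴ)) * M := by
    rw [hMH, hMdef, Matrix.fromBlocks_multiply, Matrix.fromBlocks_multiply,
      Matrix.fromBlocks_inj]
    have hstar_r : star r = r := hrconj
    have hstar_a : star α = r * r - α := hconj
    refine ⟨?_, ?_, ?_, ?_⟩ <;>
    · simp only [hAdH, hBdH, hCdH, hDdH, hAd2, hBd, hCd, hDd, hA',
        conjTranspose_sub, conjTranspose_add, conjTranspose_smul,
        conjTranspose_mul, conjTranspose_one, hPH, hQH, hstar_r, hstar_a,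
        star_mul', Matrix.mul_add, Matrix.add_mul, Matrix.mul_sub,
        Matrix.sub_mul, Matrix.mul_neg, Matrix.neg_mul,
        Matrix.mul_smul, Matrix.smul_mul, smul_add, smul_sub, smul_smul,
        Matrix.mul_one, Matrix.one_mul, Matrix.mul_assoc, Matrix.zero_mul,
        Matrix.mul_zero, add_zero, zero_add, smul_zero,
        hPSx, hSPx, hQSx, hSQx, hPS, hSP, hQS, hSQ]
      match_scalars <;> ring
  rw [key]
  exact hKYP.conjTranspose_mul_mul_same M
end

section
/- Let A ∈ ℂ^{n×n}, B ∈ ℂ^{n×m}, C ∈ ℂ^{m×n}, D ∈ ℂ^{m×m}, let α ∈ ℂ with Re α > 0 and α I_n − A invertible, and define the internal Cayley transform 𝐀 = (α I_n − A)^{-1}(ᾱ I_n + A), 𝐁 = √(2 Re α) · (α I_n − A)^{-1} B, 𝐂 = √(2 Re α) · C (α I_n − A)^{-1}, 𝐃 = C (α I_n − A)^{-1} B + D. If X ∈ ℂ^{n×n} is Hermitian positive semidefinite and the continuous-time scattering KYP inequality holds, i.e., the block matrix [[−A^H X − X A − C^H C, −X B − C^H D], [−B^H X − D^H C, I_m −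 D^H D]] is positive semidefinite, then X solves the discrete-time scattering KYP inequality for the transformed system, i.e., the block matrix [[−𝐀^H X 𝐀 + X − 𝐂^H 𝐂, −𝐀^H X 𝐁 − 𝐂^H 𝐃], [−𝐃^H 𝐂 − 𝐁^H X 𝐀, I_m − 𝐃^H 𝐃 − 𝐁^H X 𝐁]] is positive semidefinite. -/
open Matrix
open scoped ComplexOrder

/-- The internal Cayley (Tustin) transform maps a solution of the continuous-time
scattering KYP inequality to a solution of the discrete-time scattering KYP
inequality for the transformed system. -/
theorem internal_cayley_preserves_sKYP
    (n m : ℕ)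
    (A : Matrix (Fin n) (Fin n) ℂ)
    (B : Matrix (Fin n) (Fin m) ℂ)
    (C : Matrix (Fin m) (Fin n) ℂ)
    (D : Matrix (Fin m) (Fin m) ℂ)
    (α : ℂ) (hα : 0 < α.re)
    (hinv : IsUnit (α • (1 : Matrix (Fin n) (Fin n) ℂ) - A))
    (Ad : Matrix (Fin n) (Fin n) ℂ)
    (hAd : Ad = (α • (1 : Matrix (Fin n) (Fin n) ℂ) - A)⁻¹
        * ((starRingEnd ℂ) α • (1 : Matrix (Fin n) (Fin n) ℂ) + A))
    (Bd : Matrix (Fin n) (Fin m) ℂ)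
    (hBd : Bd = (Real.sqrt (2 * α.re) : ℂ)
        • ((α • (1 : Matrix (Fin n) (Fin n) ℂ) - A)⁻¹ * B))
    (Cd : Matrix (Fin m) (Fin n) ℂ)
    (hCd : Cd = (Real.sqrt (2 * α.re) : ℂ)
        • (C * (α • (1 : Matrix (Fin n) (Fin n) ℂ) - A)⁻¹))
    (Dd : Matrix (Fin m) (Fin m) ℂ)
    (hDd : Dd = C * (α • (1 : Matrix (Fin n) (Fin n) ℂ) - A)⁻¹ * B + D)
    (X : Matrix (Fin n) (Fin n) ℂ) (hX : X.PosSemidef)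
    (hKYP : (Matrix.fromBlocks
        (-(Aᴴ * X) - X * A - Cᴴ * C) (-(X * B) - Cᴴ * D)
        (-(Bᴴ * X) - Dᴴ * C) (1 - Dᴴ * D)).PosSemidef) :
    (Matrix.fromBlocks
        (-(Adᴴ * X * Ad) + X - Cdᴴ * Cd) (-(Adᴴ * X * Bd) - Cdᴴ * Dd)
        (-(Ddᴴ * Cd) - Bdᴴ * X * Ad) (1 - Ddᴴ * Dd - Bdᴴ * X * Bd)).PosSemidef := by
  have hdet : IsUnit (α • (1 : Matrix (Fin n) (Fin n) ℂ) - A).det :=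
    (Matrix.isUnit_iff_isUnit_det _).mp hinv
  set E := α • (1 : Matrix (Fin n) (Fin n) ℂ) - A with hE
  set F := E⁻¹ with hF
  set s := ((Real.sqrt (2 * α.re) : ℝ) : ℂ) with hsdef
  have hEF : E * F = 1 := Matrix.mul_nonsing_inv E hdet
  have hFE : F * E = 1 := Matrix.nonsing_inv_mul E hdet
  have hFhEh : Fᴴ * Eᴴ = 1 := by rw [← conjTranspose_mul, hEF, conjTranspose_one]
  have hEhFh : Eᴴ * Fᴴ = 1 := by rw [← conjTranspose_mul, hFE, conjTranspose_one]
  have hEFm : ∀ {k : Type} [Fintype k] (M : Matrix (Fin n) k ℂ), E * (F * M) = M := fun M => by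
    rw [← Matrix.mul_assoc, hEF, Matrix.one_mul]
  have hFEm : ∀ {k : Type} [Fintype k] (M : Matrix (Fin n) k ℂ), F * (E * M) = M := fun M => by
    rw [← Matrix.mul_assoc, hFE, Matrix.one_mul]
  have hFhEhm : ∀ {k : Type} [Fintype k] (M : Matrix (Fin n) k ℂ), Fᴴ * (Eᴴ * M) = M := fun M => by
    rw [← Matrix.mul_assoc, hFhEh, Matrix.one_mul]
  have hEhFhm : ∀ {k : Type} [Fintype k] (M : Matrix (Fin n) k ℂ), Eᴴ * (Fᴴ * M) = M := fun M => by
    rw [← Matrix.mul_assoc, hEhFh, Matrix.one_mul]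
  have hss : star s = s := by rw [hsdef]; exact Complex.conj_ofReal _
  have hs2 : s * s = α + (starRingEnd ℂ) α := by
    rw [hsdef, ← Complex.ofReal_mul, Real.mul_self_sqrt (by positivity),
      Complex.add_conj]
  have hXh : Xᴴ = X := hX.1
  have hA : A = α • 1 - E := by rw [hE]; simp
  rw [hAd, hBd, hCd, hDd]
  suffices h : (Matrix.fromBlocks
        (-((F * ((starRingEnd ℂ) α • 1 + A))ᴴ * X * (F * ((starRingEnd ℂ) α • 1 + A))) + X
            - (s • (C * F))ᴴ * (s • (C * F)))
        (-((F * ((starRingEnd ℂ) α • 1 + A))ᴴ * X * (s • (F * B)))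
            - (s • (C * F))ᴴ * (C * F * B + D))
        (-((C * F * B + D)ᴴ * (s • (C * F)))
            - (s • (F * B))ᴴ * X * (F * ((starRingEnd ℂ) α • 1 + A)))
        (1 - (C * F * B + D)ᴴ * (C * F * B + D) - (s • (F * B))ᴴ * X * (s • (F * B))))
      = (Matrix.fromBlocks (s • F) (F * B) (0 : Matrix (Fin m) (Fin n) ℂ) 1)ᴴ
        * (Matrix.fromBlocks
            (-(Aᴴ * X) - X * A - Cᴴ * C) (-(X * B) - Cᴴ * D)
            (-(Bᴴ * X) - Dᴴ * C) (1 - Dᴴ * D))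
        * (Matrix.fromBlocks (s • F) (F * B) (0 : Matrix (Fin m) (Fin n) ℂ) 1) by
    rw [h]
    exact hKYP.conjTranspose_mul_mul_same _
  rw [fromBlocks_conjTranspose, fromBlocks_multiply, fromBlocks_multiply]
  rw [Matrix.fromBlocks_inj]
  have hXA : X * A = α • X - X * E := by rw [hA]; simp [Matrix.mul_sub, mul_smul_comm]
  have hAX : Aᴴ * X = (starRingEnd ℂ) α • X - Eᴴ * X := by
    rw [hA]; simp [Matrix.sub_mul, Matrix.smul_mul, conjTranspose_sub, conjTranspose_smul,
      conjTranspose_one]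
  refine ⟨?_, ?_, ?_, ?_⟩ <;>
  · simp only [hA, conjTranspose_mul, conjTranspose_smul, conjTranspose_add,
      conjTranspose_sub, conjTranspose_one, conjTranspose_zero, hss, hXh,
      Matrix.mul_add, Matrix.add_mul, Matrix.mul_sub, Matrix.sub_mul,
      Matrix.neg_mul, Matrix.mul_neg, Matrix.smul_mul, Matrix.mul_smul,
      Matrix.mul_one, Matrix.one_mul, Matrix.zero_mul, Matrix.mul_zero,
      add_zero, zero_add, smul_smul, Matrix.mul_assoc,
      hEFm, hFEm, hFhEhm, hEhFhm, hEF, hFE, hFhEh, hEhFh, hs2]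
    match_scalars <;>
      (try simp only [Complex.star_def, Complex.conj_conj]) <;>
      first
        | ring1
        | linear_combination hs2
        | linear_combination -hs2
        | linear_combination ((starRingEnd ℂ) α + α) * hs2
        | linear_combination (-(starRingEnd ℂ) α - α) * hs2
end

section
/- Let A ∈ ℂ^{n×n}, B ∈ ℂ^{n×m}, C ∈ ℂ^{m×n}, D ∈ ℂ^{m×m}, let α ∈ ℂ with Re α > 0 and α I_n − A invertible, and define the internal Cayley transform 𝐀 = (α I_n − A)^{-1}(ᾱ I_n + A), 𝐁 = √(2 Re α) · (α I_n − A)^{-1} B, 𝐂 = √(2 Re α) · C (α I_n − A)^{-1}, 𝐃 = C (α I_n − A)^{-1} B + D. Let z ∈ ℂ with z ≠ −1 and set w := (α z − ᾱ)/(z + 1). If z I_n − 𝐀 and w I_n − A are invertible, then 𝐂 (z I_n − 𝐀)^{-1} 𝐁 + 𝐃 = C (w I_n − A)^{-1} B + D; that is, the transfer function of the internal Cayley transform is 𝒯((αz − ᾱ)/(z + 1)), where 𝒯(s) = C (s I_n − A)^{-1} B + D is the continuous-time transfer function. -/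
open Matrix
open scoped ComplexOrder

/-- The transfer function of the internal Cayley transform at `z` equals the
continuous-time transfer function at `w = (αz - ᾱ)/(z + 1)`. -/
theorem internal_cayley_transfer_function
    (n m : ℕ)
    (A : Matrix (Fin n) (Fin n) ℂ)
    (B : Matrix (Fin n) (Fin m) ℂ)
    (C : Matrix (Fin m) (Fin n) ℂ)
    (D : Matrix (Fin m) (Fin m) ℂ)
    (α : ℂ) (hα : 0 < α.re)
    (hinv : IsUnit (α • (1 : Matrix (Fin n) (Fin n) ℂ) - A))
    (Ad : Matrix (Fin n) (Fin n) ℂ)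
    (hAd : Ad = (α • (1 : Matrix (Fin n) (Fin n) ℂ) - A)⁻¹
        * ((starRingEnd ℂ) α • (1 : Matrix (Fin n) (Fin n) ℂ) + A))
    (Bd : Matrix (Fin n) (Fin m) ℂ)
    (hBd : Bd = (Real.sqrt (2 * α.re) : ℂ)
        • ((α • (1 : Matrix (Fin n) (Fin n) ℂ) - A)⁻¹ * B))
    (Cd : Matrix (Fin m) (Fin n) ℂ)
    (hCd : Cd = (Real.sqrt (2 * α.re) : ℂ)
        • (C * (α • (1 : Matrix (Fin n) (Fin n) ℂ) - A)⁻¹))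
    (Dd : Matrix (Fin m) (Fin m) ℂ)
    (hDd : Dd = C * (α • (1 : Matrix (Fin n) (Fin n) ℂ) - A)⁻¹ * B + D)
    (z : ℂ) (hz : z ≠ -1)
    (w : ℂ) (hw : w = (α * z - (starRingEnd ℂ) α) / (z + 1))
    (hzA : IsUnit (z • (1 : Matrix (Fin n) (Fin n) ℂ) - Ad))
    (hwA : IsUnit (w • (1 : Matrix (Fin n) (Fin n) ℂ) - A)) :
    Cd * (z • (1 : Matrix (Fin n) (Fin n) ℂ) - Ad)⁻¹ * Bd + Dd
      = C * (w • (1 : Matrix (Fin n) (Fin n) ℂ) - A)⁻¹ * B + D := by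
  set M := α • (1 : Matrix (Fin n) (Fin n) ℂ) - A with hMdef
  set N := w • (1 : Matrix (Fin n) (Fin n) ℂ) - A with hNdef
  set u : ℂ := (Real.sqrt (2 * α.re) : ℂ) with hu
  have hz1 : z + 1 ≠ 0 := fun h => hz (by linear_combination h)
  have key : (z + 1) * w = α * z - (starRingEnd ℂ) α := by
    rw [hw]; field_simp
  have h2 : α + (starRingEnd ℂ) α = 2 * (α.re : ℂ) := by
    have := Complex.add_conj α
    push_cast at this
    linear_combination this
  have hMdet : IsUnit M.det := (Matrix.isUnit_iff_isUnit_det _).mp hinv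
  have hNdet : IsUnit N.det := (Matrix.isUnit_iff_isUnit_det _).mp hwA
  have hMM : M⁻¹ * M = 1 := Matrix.nonsing_inv_mul M hMdet
  have hMM' : M * M⁻¹ = 1 := Matrix.mul_nonsing_inv M hMdet
  have hNN : N * N⁻¹ = 1 := Matrix.mul_nonsing_inv N hNdet
  have husq : u * u = 2 * (α.re : ℂ) := by
    rw [hu, ← Complex.ofReal_mul, Real.mul_self_sqrt (by positivity)]
    push_cast; ring
  have hsw : 2 * (α.re : ℂ) / (z + 1) + w = α := by
    field_simp
    linear_combination key - h2
  have hZ : z • (1 : Matrix (Fin n) (Fin n) ℂ) - Ad = M⁻¹ * ((z + 1) • N) := by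
    rw [hAd]
    have h1 : z • (1 : Matrix (Fin n) (Fin n) ℂ) = M⁻¹ * (z • M) := by
      rw [mul_smul_comm, hMM]
    rw [h1, ← Matrix.mul_sub]
    congr 1
    rw [hNdef, hMdef]
    match_scalars
    · linear_combination -key
    · ring
  have hZinv : (z • (1 : Matrix (Fin n) (Fin n) ℂ) - Ad)⁻¹
      = (z + 1)⁻¹ • (N⁻¹ * M) := by
    apply Matrix.inv_eq_right_inv
    rw [hZ]
    simp only [smul_mul_assoc, mul_smul_comm, smul_smul, mul_assoc]
    rw [← mul_assoc N N⁻¹, hNN, one_mul, hMM, inv_mul_cancel₀ hz1, one_smul]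
  have hkey : (2 * (α.re : ℂ) / (z + 1)) • (M⁻¹ * N⁻¹) + M⁻¹ = N⁻¹ := by
    have hMN : (2 * (α.re : ℂ) / (z + 1)) • (1 : Matrix (Fin n) (Fin n) ℂ) + N = M := by
      rw [hNdef, hMdef]
      match_scalars
      · linear_combination hsw
      · ring
    calc (2 * (α.re : ℂ) / (z + 1)) • (M⁻¹ * N⁻¹) + M⁻¹
        = M⁻¹ * ((2 * (α.re : ℂ) / (z + 1)) • N⁻¹ + 1) := by
          rw [Matrix.mul_add, mul_smul_comm, mul_one]
      _ = M⁻¹ * (((2 * (α.re : ℂ) / (z + 1)) • (1 : Matrix (Fin n) (Fin n) ℂ) + N) * N⁻¹) := by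
          rw [Matrix.add_mul, smul_mul_assoc, one_mul, hNN]
      _ = N⁻¹ := by rw [hMN, ← mul_assoc, hMM, one_mul]
  rw [hCd, hBd, hDd, hZinv]
  have hcol : M * (M⁻¹ * B) = B := by rw [← Matrix.mul_assoc, hMM', Matrix.one_mul]
  conv_rhs => rw [← hkey]
  simp only [Matrix.smul_mul, Matrix.mul_smul, smul_smul, Matrix.mul_assoc, Matrix.add_mul,
    Matrix.mul_add, hcol]
  match_scalars
  · linear_combination (1 + z)⁻¹ * husq
  · ring
  · ring
end
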